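/- arXiv:2203.00035 — 8 statements merged into one kernel-verified Lean document; each statement's English description precedes it below -/
import Mathlib

section
/- Let π: X × P(X) → P(U) be a policy satisfying |π(x,μ_1) − π(x,μ_2)|_1 ≤ L_Q |μ_1 − μ_2|_1 for all x ∈ X, μ_1, μ_2 ∈ P(X). Then for all μ_1, μ_2 ∈ P(X): |ν^MF(μ_1,π) − ν^MF(μ_2,π)|_1 ≤ (1 + L_Q) |μ_1 − μ_2|_1. -/
/-- A probability distribution on a finite type, viewed as a vector. -/
def IsDist {α : Type*} [Fintype α] (μ : α → ℝ) : Prop :=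
  (∀ a, 0 ≤ μ a) ∧ ∑ a, μ a = 1

/-- Mean-field action distribution `ν^MF(μ,π) = Σ_x π(x,μ) μ(x)`. -/
noncomputable def nuMF {X U : Type*} [Fintype X] [Fintype U]
    (π : X → (X → ℝ) → U → ℝ) (μ : X → ℝ) : U → ℝ :=
  fun u => ∑ x, π x μ u * μ x

/-- Lemma 1: Lipschitz continuity of `ν^MF(·,π)`
with constant `1 + L_Q`. -/
theorem nuMF_lipschitz {X U : Type*} [Fintype X] [Fintype U]
    (π : X → (X → ℝ) → U → ℝ) (L_Q : ℝ)
    (hπ : ∀ x μ, IsDist μ → IsDist (π x μ))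
    (hπLip : ∀ x (μ₁ μ₂ : X → ℝ), IsDist μ₁ → IsDist μ₂ →
      ∑ u, |π x μ₁ u - π x μ₂ u| ≤ L_Q * ∑ y, |μ₁ y - μ₂ y|)
    (μ₁ μ₂ : X → ℝ) (h₁ : IsDist μ₁) (h₂ : IsDist μ₂) :
    ∑ u, |nuMF π μ₁ u - nuMF π μ₂ u| ≤ (1 + L_Q) * ∑ y, |μ₁ y - μ₂ y| := by
  obtain ⟨h2n, h2s⟩ := h₂
  set D := ∑ y, |μ₁ y - μ₂ y| with hD
  have key : ∀ u, |nuMF π μ₁ u - nuMF π μ₂ u| ≤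
      ∑ x, (π x μ₁ u * |μ₁ x - μ₂ x| + |π x μ₁ u - π x μ₂ u| * μ₂ x) := by
    intro u
    unfold nuMF
    rw [← Finset.sum_sub_distrib]
    refine (Finset.abs_sum_le_sum_abs _ _).trans (Finset.sum_le_sum fun x _ => ?_)
    have e : π x μ₁ u * μ₁ x - π x μ₂ u * μ₂ x
        = π x μ₁ u * (μ₁ x - μ₂ x) + (π x μ₁ u - π x μ₂ u) * μ₂ x := by ring
    rw [e]
    refine (abs_add_le _ _).trans ?_
    rw [abs_mul, abs_mul, abs_of_nonneg ((hπ x μ₁ h₁).1 u), abs_of_nonneg (h2n x)]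
  calc ∑ u, |nuMF π μ₁ u - nuMF π μ₂ u|
      ≤ ∑ u, ∑ x, (π x μ₁ u * |μ₁ x - μ₂ x| + |π x μ₁ u - π x μ₂ u| * μ₂ x) :=
        Finset.sum_le_sum fun u _ => key u
    _ = ∑ x, ((∑ u, π x μ₁ u) * |μ₁ x - μ₂ x| + (∑ u, |π x μ₁ u - π x μ₂ u|) * μ₂ x) := by
        rw [Finset.sum_comm]
        simp [Finset.sum_add_distrib, Finset.sum_mul]
    _ ≤ ∑ x, (1 * |μ₁ x - μ₂ x| + (L_Q * D) * μ₂ x) := by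
        refine Finset.sum_le_sum fun x _ => add_le_add ?_ ?_
        · rw [(hπ x μ₁ h₁).2]
        · exact mul_le_mul_of_nonneg_right (hπLip x μ₁ μ₂ h₁ ⟨h2n, h2s⟩) (h2n x)
    _ = (1 + L_Q) * D := by
        rw [Finset.sum_add_distrib, ← Finset.mul_sum, ← Finset.mul_sum, h2s]
        ring
end

section
/- Let P: X × U × P(X) × P(U) → P(X) satisfy |P(x,u,μ_1,ν_1) − P(x,u,μ_2,ν_2)|_1 ≤ L_P(|μ_1−μ_2|_1 + |ν_1−ν_2|_1) for all x, u, μ_1, μ_2, ν_1, ν_2, and let π: X × P(X) → P(U) satisfy |π(x,μ_1) − π(x,μ_2)|_1 ≤ L_Q |μ_1 − μ_2|_1 for all x, μ_1, μ_2. Then for all μ_1, μ_2 ∈ P(X): |P^MF(μ_1,π) − P^MF(μ_2,π)|_1 ≤ S_P |μ_1 − μ_2|_1, where S_P := (1 + L_Q) + L_P(2 + L_Q). -/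
/-- Mean-field state update
`P^MF(μ,π) = Σ_x Σ_u P(x,u,μ,ν^MF(μ,π)) π(x,μ)(u) μ(x)`. -/
noncomputable def PMFstep {X U : Type*} [Fintype X] [Fintype U]
    (P : X → U → (X → ℝ) → (U → ℝ) → X → ℝ)
    (π : X → (X → ℝ) → U → ℝ) (μ : X → ℝ) : X → ℝ :=
  fun y => ∑ x, ∑ u, P x u μ (nuMF π μ) y * π x μ u * μ x

/-- Lemma 2: Lipschitz continuity of `P^MF(·,π)` with constant
`S_P = (1 + L_Q) + L_P (2 + L_Q)`. -/
theorem PMFstep_lipschitz {X U : Type*} [Fintype X] [Fintype U]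
    (P : X → U → (X → ℝ) → (U → ℝ) → X → ℝ) (L_P : ℝ)
    (hP : ∀ x u μ ν, IsDist μ → IsDist ν → IsDist (P x u μ ν))
    (hPLip : ∀ x u (μ₁ μ₂ : X → ℝ) (ν₁ ν₂ : U → ℝ),
      IsDist μ₁ → IsDist μ₂ → IsDist ν₁ → IsDist ν₂ →
      ∑ y, |P x u μ₁ ν₁ y - P x u μ₂ ν₂ y| ≤
        L_P * ((∑ y, |μ₁ y - μ₂ y|) + (∑ v, |ν₁ v - ν₂ v|)))
    (π : X → (X → ℝ) → U → ℝ) (L_Q : ℝ)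
    (hπ : ∀ x μ, IsDist μ → IsDist (π x μ))
    (hπLip : ∀ x (μ₁ μ₂ : X → ℝ), IsDist μ₁ → IsDist μ₂ →
      ∑ u, |π x μ₁ u - π x μ₂ u| ≤ L_Q * ∑ y, |μ₁ y - μ₂ y|)
    (μ₁ μ₂ : X → ℝ) (h₁ : IsDist μ₁) (h₂ : IsDist μ₂) :
    ∑ y, |PMFstep P π μ₁ y - PMFstep P π μ₂ y| ≤
      ((1 + L_Q) + L_P * (2 + L_Q)) * ∑ y, |μ₁ y - μ₂ y| := by
  classical
  set D := ∑ y, |μ₁ y - μ₂ y| with hDdef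
  have hDnn : 0 ≤ D := Finset.sum_nonneg fun _ _ => abs_nonneg _
  by_cases hD0 : D = 0
  · have hμ : μ₁ = μ₂ := by
      funext y
      have h := (Finset.sum_eq_zero_iff_of_nonneg
        (fun y _ => abs_nonneg (μ₁ y - μ₂ y))).1 hD0 y (Finset.mem_univ y)
      have := abs_eq_zero.mp h
      linarith
    rw [hμ]
    simp [← hDdef, hD0]
  have hDpos : 0 < D := lt_of_le_of_ne hDnn (Ne.symm hD0)
  have hX : Nonempty X := by
    rcases isEmpty_or_nonempty X with h | h
    · exfalso; have := h₁.2; simp at this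
    · exact h
  obtain ⟨x0⟩ := hX
  have hU : Nonempty U := by
    rcases isEmpty_or_nonempty U with h | h
    · exfalso; have := (hπ x0 μ₁ h₁).2; simp at this
    · exact h
  obtain ⟨u0⟩ := hU
  -- ν is a distribution
  have hν : ∀ μ, IsDist μ → IsDist (nuMF π μ) := by
    intro μ hμ
    constructor
    · intro u
      exact Finset.sum_nonneg fun x _ => mul_nonneg ((hπ x μ hμ).1 u) (hμ.1 x)
    · calc ∑ u, ∑ x, π x μ u * μ x = ∑ x, ∑ u, π x μ u * μ x := Finset.sum_comm
        _ = ∑ x, (∑ u, π x μ u) * μ x := by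
            refine Finset.sum_congr rfl fun x _ => ?_
            rw [Finset.sum_mul]
        _ = ∑ x, μ x := by
            refine Finset.sum_congr rfl fun x _ => ?_
            rw [(hπ x μ hμ).2, one_mul]
        _ = 1 := hμ.2
  have hν₁ := hν μ₁ h₁
  have hν₂ := hν μ₂ h₂
  set ν₁ := nuMF π μ₁
  set ν₂ := nuMF π μ₂
  -- Lipschitz bound for ν
  have hDνnn : 0 ≤ ∑ v, |ν₁ v - ν₂ v| := Finset.sum_nonneg fun _ _ => abs_nonneg _
  have hDν : ∑ v, |ν₁ v - ν₂ v| ≤ (1 + L_Q) * D := by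
    have step1 : ∑ v, |ν₁ v - ν₂ v| ≤
        ∑ x, ∑ v, |π x μ₁ v * μ₁ x - π x μ₂ v * μ₂ x| := by
      rw [Finset.sum_comm]
      refine Finset.sum_le_sum fun v _ => ?_
      have : ν₁ v - ν₂ v = ∑ x, (π x μ₁ v * μ₁ x - π x μ₂ v * μ₂ x) := by
        simp [ν₁, ν₂, nuMF, Finset.sum_sub_distrib]
      rw [this]
      exact Finset.abs_sum_le_sum_abs _ _
    have step2 : ∀ x, ∑ v, |π x μ₁ v * μ₁ x - π x μ₂ v * μ₂ x| ≤
        L_Q * D * μ₁ x + |μ₁ x - μ₂ x| := by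
      intro x
      have ptw : ∀ v, |π x μ₁ v * μ₁ x - π x μ₂ v * μ₂ x| ≤
          |π x μ₁ v - π x μ₂ v| * μ₁ x + π x μ₂ v * |μ₁ x - μ₂ x| := by
        intro v
        have hid : π x μ₁ v * μ₁ x - π x μ₂ v * μ₂ x =
            (π x μ₁ v - π x μ₂ v) * μ₁ x + π x μ₂ v * (μ₁ x - μ₂ x) := by ring
        rw [hid]
        calc |(π x μ₁ v - π x μ₂ v) * μ₁ x + π x μ₂ v * (μ₁ x - μ₂ x)| ≤
            |(π x μ₁ v - π x μ₂ v) * μ₁ x| + |π x μ₂ v * (μ₁ x - μ₂ x)| := abs_add_le _ _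
          _ = |π x μ₁ v - π x μ₂ v| * μ₁ x + π x μ₂ v * |μ₁ x - μ₂ x| := by
              rw [abs_mul, abs_mul, abs_of_nonneg (h₁.1 x), abs_of_nonneg ((hπ x μ₂ h₂).1 v)]
      have hq := hπLip x μ₁ μ₂ h₁ h₂
      rw [← hDdef] at hq
      calc ∑ v, |π x μ₁ v * μ₁ x - π x μ₂ v * μ₂ x|
          ≤ ∑ v, (|π x μ₁ v - π x μ₂ v| * μ₁ x + π x μ₂ v * |μ₁ x - μ₂ x|) :=
            Finset.sum_le_sum fun v _ => ptw v
        _ = (∑ v, |π x μ₁ v - π x μ₂ v|) * μ₁ x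
            + (∑ v, π x μ₂ v) * |μ₁ x - μ₂ x| := by
            rw [Finset.sum_add_distrib, ← Finset.sum_mul, ← Finset.sum_mul]
        _ ≤ (L_Q * D) * μ₁ x + 1 * |μ₁ x - μ₂ x| := by
            refine add_le_add (mul_le_mul_of_nonneg_right hq (h₁.1 x)) ?_
            rw [(hπ x μ₂ h₂).2]
        _ = L_Q * D * μ₁ x + |μ₁ x - μ₂ x| := by ring
    calc ∑ v, |ν₁ v - ν₂ v| ≤ ∑ x, ∑ v, |π x μ₁ v * μ₁ x - π x μ₂ v * μ₂ x| := step1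
      _ ≤ ∑ x, (L_Q * D * μ₁ x + |μ₁ x - μ₂ x|) := Finset.sum_le_sum fun x _ => step2 x
      _ = L_Q * D * (∑ x, μ₁ x) + D := by
          rw [Finset.sum_add_distrib, ← Finset.mul_sum]
      _ = (1 + L_Q) * D := by rw [h₁.2]; ring
  -- L_P is nonnegative
  have hLP : 0 ≤ L_P := by
    have h0 : (0:ℝ) ≤ ∑ y, |P x0 u0 μ₁ ν₁ y - P x0 u0 μ₂ ν₂ y| :=
      Finset.sum_nonneg fun _ _ => abs_nonneg _
    have h1 := hPLip x0 u0 μ₁ μ₂ ν₁ ν₂ h₁ h₂ hν₁ hν₂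
    rw [← hDdef] at h1
    have hpos : 0 < D + ∑ v, |ν₁ v - ν₂ v| := by linarith
    nlinarith
  -- key pointwise bound: P₁ difference bound
  have hPdiff : ∀ x u, ∑ y, |P x u μ₁ ν₁ y - P x u μ₂ ν₂ y| ≤ L_P * (2 + L_Q) * D := by
    intro x u
    have h1 := hPLip x u μ₁ μ₂ ν₁ ν₂ h₁ h₂ hν₁ hν₂
    rw [← hDdef] at h1
    calc ∑ y, |P x u μ₁ ν₁ y - P x u μ₂ ν₂ y|
        ≤ L_P * (D + ∑ v, |ν₁ v - ν₂ v|) := h1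
      _ ≤ L_P * (D + (1 + L_Q) * D) := by
          exact mul_le_mul_of_nonneg_left (by linarith) hLP
      _ = L_P * (2 + L_Q) * D := by ring
  set C := L_P * (2 + L_Q) * D with hCdef
  -- per (x,u) bound
  have key : ∀ x u, ∑ y, |P x u μ₁ ν₁ y * π x μ₁ u * μ₁ x
      - P x u μ₂ ν₂ y * π x μ₂ u * μ₂ x| ≤
      C * (π x μ₁ u * μ₁ x) + |π x μ₁ u - π x μ₂ u| * μ₁ x
        + π x μ₂ u * |μ₁ x - μ₂ x| := by
    intro x u
    have hb₁ : 0 ≤ π x μ₁ u := (hπ x μ₁ h₁).1 u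
    have hb₂ : 0 ≤ π x μ₂ u := (hπ x μ₂ h₂).1 u
    have hc₁ : 0 ≤ μ₁ x := h₁.1 x
    have ptw : ∀ y, |P x u μ₁ ν₁ y * π x μ₁ u * μ₁ x
        - P x u μ₂ ν₂ y * π x μ₂ u * μ₂ x| ≤
        |P x u μ₁ ν₁ y - P x u μ₂ ν₂ y| * (π x μ₁ u * μ₁ x)
        + P x u μ₂ ν₂ y * (|π x μ₁ u - π x μ₂ u| * μ₁ x)
        + P x u μ₂ ν₂ y * (π x μ₂ u * |μ₁ x - μ₂ x|) := by
      intro y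
      have ha₂ : 0 ≤ P x u μ₂ ν₂ y := (hP x u μ₂ ν₂ h₂ hν₂).1 y
      have hid : P x u μ₁ ν₁ y * π x μ₁ u * μ₁ x - P x u μ₂ ν₂ y * π x μ₂ u * μ₂ x =
          (P x u μ₁ ν₁ y - P x u μ₂ ν₂ y) * (π x μ₁ u * μ₁ x)
          + P x u μ₂ ν₂ y * ((π x μ₁ u - π x μ₂ u) * μ₁ x)
          + P x u μ₂ ν₂ y * (π x μ₂ u * (μ₁ x - μ₂ x)) := by ring
      rw [hid]
      refine le_trans (abs_add_three _ _ _) (le_of_eq ?_)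
      rw [abs_mul, abs_mul, abs_mul, abs_mul, abs_mul, abs_mul,
        abs_of_nonneg ha₂, abs_of_nonneg hb₁, abs_of_nonneg hb₂, abs_of_nonneg hc₁]
    have hPsum : ∑ y, P x u μ₂ ν₂ y = 1 := (hP x u μ₂ ν₂ h₂ hν₂).2
    calc ∑ y, |P x u μ₁ ν₁ y * π x μ₁ u * μ₁ x - P x u μ₂ ν₂ y * π x μ₂ u * μ₂ x|
        ≤ ∑ y, (|P x u μ₁ ν₁ y - P x u μ₂ ν₂ y| * (π x μ₁ u * μ₁ x)
          + P x u μ₂ ν₂ y * (|π x μ₁ u - π x μ₂ u| * μ₁ x)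
          + P x u μ₂ ν₂ y * (π x μ₂ u * |μ₁ x - μ₂ x|)) :=
          Finset.sum_le_sum fun y _ => ptw y
      _ = (∑ y, |P x u μ₁ ν₁ y - P x u μ₂ ν₂ y|) * (π x μ₁ u * μ₁ x)
          + (∑ y, P x u μ₂ ν₂ y) * (|π x μ₁ u - π x μ₂ u| * μ₁ x)
          + (∑ y, P x u μ₂ ν₂ y) * (π x μ₂ u * |μ₁ x - μ₂ x|) := by
          rw [Finset.sum_add_distrib, Finset.sum_add_distrib,
            ← Finset.sum_mul, ← Finset.sum_mul, ← Finset.sum_mul]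
      _ ≤ C * (π x μ₁ u * μ₁ x) + 1 * (|π x μ₁ u - π x μ₂ u| * μ₁ x)
          + 1 * (π x μ₂ u * |μ₁ x - μ₂ x|) := by
          refine add_le_add (add_le_add ?_ ?_) ?_
          · exact mul_le_mul_of_nonneg_right (hPdiff x u) (mul_nonneg hb₁ hc₁)
          · exact mul_le_mul_of_nonneg_right (le_of_eq hPsum)
              (mul_nonneg (abs_nonneg _) hc₁)
          · exact mul_le_mul_of_nonneg_right (le_of_eq hPsum)
              (mul_nonneg hb₂ (abs_nonneg _))
      _ = C * (π x μ₁ u * μ₁ x) + |π x μ₁ u - π x μ₂ u| * μ₁ x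
          + π x μ₂ u * |μ₁ x - μ₂ x| := by ring
  have hCnn : 0 ≤ C := by
    rw [hCdef, mul_assoc]
    exact mul_nonneg hLP (by nlinarith)
  -- assemble
  calc ∑ y, |PMFstep P π μ₁ y - PMFstep P π μ₂ y|
      ≤ ∑ y, ∑ x, ∑ u, |P x u μ₁ ν₁ y * π x μ₁ u * μ₁ x
          - P x u μ₂ ν₂ y * π x μ₂ u * μ₂ x| := by
        refine Finset.sum_le_sum fun y _ => ?_
        have hrepr : PMFstep P π μ₁ y - PMFstep P π μ₂ y =
            ∑ x, ∑ u, (P x u μ₁ ν₁ y * π x μ₁ u * μ₁ x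
              - P x u μ₂ ν₂ y * π x μ₂ u * μ₂ x) := by
          simp [PMFstep, ν₁, ν₂, Finset.sum_sub_distrib]
        rw [hrepr]
        refine le_trans (Finset.abs_sum_le_sum_abs _ _) ?_
        exact Finset.sum_le_sum fun x _ => Finset.abs_sum_le_sum_abs _ _
    _ = ∑ x, ∑ u, ∑ y, |P x u μ₁ ν₁ y * π x μ₁ u * μ₁ x
          - P x u μ₂ ν₂ y * π x μ₂ u * μ₂ x| := by
        rw [Finset.sum_comm]
        exact Finset.sum_congr rfl fun x _ => Finset.sum_comm
    _ ≤ ∑ x, ∑ u, (C * (π x μ₁ u * μ₁ x) + |π x μ₁ u - π x μ₂ u| * μ₁ x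
          + π x μ₂ u * |μ₁ x - μ₂ x|) :=
        Finset.sum_le_sum fun x _ => Finset.sum_le_sum fun u _ => key x u
    _ = ∑ x, (C * μ₁ x + (∑ u, |π x μ₁ u - π x μ₂ u|) * μ₁ x + |μ₁ x - μ₂ x|) := by
        refine Finset.sum_congr rfl fun x _ => ?_
        have e1 : ∑ u, C * (π x μ₁ u * μ₁ x) = C * μ₁ x := by
          rw [← Finset.mul_sum, ← Finset.sum_mul, (hπ x μ₁ h₁).2, one_mul]
        have e2 : ∑ u, |π x μ₁ u - π x μ₂ u| * μ₁ x
            = (∑ u, |π x μ₁ u - π x μ₂ u|) * μ₁ x := (Finset.sum_mul _ _ _).symm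
        have e3 : ∑ u, π x μ₂ u * |μ₁ x - μ₂ x| = |μ₁ x - μ₂ x| := by
          rw [← Finset.sum_mul, (hπ x μ₂ h₂).2, one_mul]
        rw [Finset.sum_add_distrib, Finset.sum_add_distrib, e1, e2, e3]
    _ ≤ ∑ x, (C * μ₁ x + (L_Q * D) * μ₁ x + |μ₁ x - μ₂ x|) := by
        refine Finset.sum_le_sum fun x _ => ?_
        have hq := hπLip x μ₁ μ₂ h₁ h₂
        rw [← hDdef] at hq
        have := mul_le_mul_of_nonneg_right hq (h₁.1 x)
        linarith
    _ = C * (∑ x, μ₁ x) + (L_Q * D) * (∑ x, μ₁ x) + D := by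
        rw [Finset.sum_add_distrib, Finset.sum_add_distrib,
          ← Finset.mul_sum, ← Finset.mul_sum]
    _ = ((1 + L_Q) + L_P * (2 + L_Q)) * D := by rw [h₁.2, hCdef]; ring
end

section
/- Let r: X × U × P(X) × P(U) → R satisfy |r(x,u,μ,ν)| ≤ M_R and |r(x,u,μ_1,ν_1) − r(x,u,μ_2,ν_2)| ≤ L_R(|μ_1−μ_2|_1 + |ν_1−ν_2|_1) for all x, u and all distribution arguments, and let π: X × P(X) → P(U) satisfy |π(x,μ_1) − π(x,μ_2)|_1 ≤ L_Q |μ_1 − μ_2|_1 for all x, μ_1, μ_2. Then for all μ_1, μ_2 ∈ P(X): |r^MF(μ_1,π) − r^MF(μ_2,π)| ≤ S_R |μ_1 − μ_2|_1, where S_R := M_R(1 + L_Q) + L_R(2 + L_Q). -/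
/-- Mean-field average reward
`r^MF(μ,π) = Σ_x Σ_u r(x,u,μ,ν^MF(μ,π)) π(x,μ)(u) μ(x)`. -/
noncomputable def rMF {X U : Type*} [Fintype X] [Fintype U]
    (r : X → U → (X → ℝ) → (U → ℝ) → ℝ)
    (π : X → (X → ℝ) → U → ℝ) (μ : X → ℝ) : ℝ :=
  ∑ x, ∑ u, r x u μ (nuMF π μ) * π x μ u * μ x

/-- `nuMF` of a distribution under a distribution-valued policy is a distribution. -/
lemma nuMF_isDist {X U : Type*} [Fintype X] [Fintype U]
    (π : X → (X → ℝ) → U → ℝ) (μ : X → ℝ)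
    (hπ : ∀ x, IsDist (π x μ)) (hμ : IsDist μ) : IsDist (nuMF π μ) := by
  constructor
  · intro u
    exact Finset.sum_nonneg fun x _ => mul_nonneg ((hπ x).1 u) (hμ.1 x)
  · unfold nuMF
    rw [Finset.sum_comm]
    calc ∑ x, ∑ u, π x μ u * μ x
        = ∑ x, (∑ u, π x μ u) * μ x := by simp_rw [Finset.sum_mul]
      _ = ∑ x, μ x := by
          refine Finset.sum_congr rfl fun x _ => by rw [(hπ x).2, one_mul]
      _ = 1 := hμ.2

/-- Lemma 3: Lipschitz continuity of `r^MF(·,π)` with constant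
`S_R = M_R (1 + L_Q) + L_R (2 + L_Q)`. -/
theorem rMF_lipschitz {X U : Type*} [Fintype X] [Fintype U]
    (r : X → U → (X → ℝ) → (U → ℝ) → ℝ) (M_R L_R : ℝ)
    (hrBd : ∀ x u (μ : X → ℝ) (ν : U → ℝ), IsDist μ → IsDist ν →
      |r x u μ ν| ≤ M_R)
    (hrLip : ∀ x u (μ₁ μ₂ : X → ℝ) (ν₁ ν₂ : U → ℝ),
      IsDist μ₁ → IsDist μ₂ → IsDist ν₁ → IsDist ν₂ →
      |r x u μ₁ ν₁ - r x u μ₂ ν₂| ≤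
        L_R * ((∑ y, |μ₁ y - μ₂ y|) + (∑ v, |ν₁ v - ν₂ v|)))
    (π : X → (X → ℝ) → U → ℝ) (L_Q : ℝ)
    (hπ : ∀ x μ, IsDist μ → IsDist (π x μ))
    (hπLip : ∀ x (μ₁ μ₂ : X → ℝ), IsDist μ₁ → IsDist μ₂ →
      ∑ u, |π x μ₁ u - π x μ₂ u| ≤ L_Q * ∑ y, |μ₁ y - μ₂ y|)
    (μ₁ μ₂ : X → ℝ) (h₁ : IsDist μ₁) (h₂ : IsDist μ₂) :
    |rMF r π μ₁ - rMF r π μ₂| ≤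
      (M_R * (1 + L_Q) + L_R * (2 + L_Q)) * ∑ y, |μ₁ y - μ₂ y| := by
  set D : ℝ := ∑ y, |μ₁ y - μ₂ y| with hDdef
  by_cases hD0 : D = 0
  · -- then μ₁ = μ₂
    have hzero : ∀ y ∈ Finset.univ, |μ₁ y - μ₂ y| = 0 :=
      (Finset.sum_eq_zero_iff_of_nonneg (fun y _ => abs_nonneg _)).mp hD0
    have hEq : μ₁ = μ₂ := by
      funext y
      have := abs_eq_zero.mp (hzero y (Finset.mem_univ y))
      linarith
    rw [hEq, hD0]
    simp
  · have hDnn : 0 ≤ D := Finset.sum_nonneg fun y _ => abs_nonneg _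
    have hDpos : 0 < D := lt_of_le_of_ne hDnn (Ne.symm hD0)
    set ν₁ : U → ℝ := nuMF π μ₁ with hν₁def
    set ν₂ : U → ℝ := nuMF π μ₂ with hν₂def
    have hν₁ : IsDist ν₁ := nuMF_isDist π μ₁ (fun x => hπ x μ₁ h₁) h₁
    have hν₂ : IsDist ν₂ := nuMF_isDist π μ₂ (fun x => hπ x μ₂ h₂) h₂
    set Dν : ℝ := ∑ v, |ν₁ v - ν₂ v| with hDνdef
    have hDνnn : 0 ≤ Dν := Finset.sum_nonneg fun v _ => abs_nonneg _
    -- nonemptiness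
    have hXne : Nonempty X := by
      by_contra h
      rw [not_nonempty_iff] at h
      rw [hDdef] at hD0
      simp at hD0
    obtain ⟨x₀⟩ := hXne
    have hUne : Nonempty U := by
      by_contra h
      rw [not_nonempty_iff] at h
      have := (hπ x₀ μ₁ h₁).2
      simp at this
    obtain ⟨u₀⟩ := hUne
    -- nonnegativity of constants
    have hMR : 0 ≤ M_R := le_trans (abs_nonneg _) (hrBd x₀ u₀ μ₁ ν₁ h₁ hν₁)
    have hLQ : 0 ≤ L_Q := by
      have h1 := hπLip x₀ μ₁ μ₂ h₁ h₂
      have h2 : (0:ℝ) ≤ ∑ u, |π x₀ μ₁ u - π x₀ μ₂ u| :=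
        Finset.sum_nonneg fun u _ => abs_nonneg _
      nlinarith
    have hLR : 0 ≤ L_R := by
      have h1 := hrLip x₀ u₀ μ₁ μ₂ ν₁ ν₂ h₁ h₂ hν₁ hν₂
      have h2 : (0:ℝ) ≤ |r x₀ u₀ μ₁ ν₁ - r x₀ u₀ μ₂ ν₂| := abs_nonneg _
      nlinarith
    -- key bound on Dν
    have hDν : Dν ≤ (1 + L_Q) * D := by
      have step1 : Dν ≤ ∑ u, ∑ x,
          (π x μ₁ u * |μ₁ x - μ₂ x| + |π x μ₁ u - π x μ₂ u| * μ₂ x) := by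
        rw [hDνdef]
        refine Finset.sum_le_sum fun u _ => ?_
        have hrepr : ν₁ u - ν₂ u = ∑ x,
            (π x μ₁ u * (μ₁ x - μ₂ x) + (π x μ₁ u - π x μ₂ u) * μ₂ x) := by
          rw [hν₁def, hν₂def]
          unfold nuMF
          rw [← Finset.sum_sub_distrib]
          refine Finset.sum_congr rfl fun x _ => by ring
        rw [hrepr]
        refine le_trans (Finset.abs_sum_le_sum_abs _ _) ?_
        refine Finset.sum_le_sum fun x _ => ?_
        refine le_trans (abs_add_le _ _) ?_
        rw [abs_mul, abs_mul, abs_of_nonneg ((hπ x μ₁ h₁).1 u),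
          abs_of_nonneg (h₂.1 x)]
      rw [Finset.sum_comm] at step1
      have step2 : ∀ x ∈ Finset.univ, ∑ u,
          (π x μ₁ u * |μ₁ x - μ₂ x| + |π x μ₁ u - π x μ₂ u| * μ₂ x)
          ≤ |μ₁ x - μ₂ x| + L_Q * D * μ₂ x := by
        intro x _
        rw [Finset.sum_add_distrib, ← Finset.sum_mul, ← Finset.sum_mul,
          (hπ x μ₁ h₁).2, one_mul]
        have := hπLip x μ₁ μ₂ h₁ h₂
        have hμ2 := h₂.1 x
        nlinarith
      have step3 : ∑ x, (|μ₁ x - μ₂ x| + L_Q * D * μ₂ x) = D + L_Q * D := by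
        rw [Finset.sum_add_distrib, ← Finset.mul_sum, h₂.2, mul_one, ← hDdef]
      calc Dν ≤ ∑ x, ∑ u,
          (π x μ₁ u * |μ₁ x - μ₂ x| + |π x μ₁ u - π x μ₂ u| * μ₂ x) := step1
        _ ≤ ∑ x, (|μ₁ x - μ₂ x| + L_Q * D * μ₂ x) := Finset.sum_le_sum step2
        _ = D + L_Q * D := step3
        _ = (1 + L_Q) * D := by ring
    -- main estimate
    have hmain : |rMF r π μ₁ - rMF r π μ₂| ≤
        L_R * (D + Dν) + M_R * (L_Q * D) + M_R * D := by
      have hrepr : rMF r π μ₁ - rMF r π μ₂ = ∑ x, ∑ u,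
          (r x u μ₁ ν₁ * π x μ₁ u * μ₁ x - r x u μ₂ ν₂ * π x μ₂ u * μ₂ x) := by
        unfold rMF
        rw [← hν₁def, ← hν₂def, ← Finset.sum_sub_distrib]
        exact Finset.sum_congr rfl fun x _ => by rw [← Finset.sum_sub_distrib]
      rw [hrepr]
      have pointwise : ∀ x u,
          |r x u μ₁ ν₁ * π x μ₁ u * μ₁ x - r x u μ₂ ν₂ * π x μ₂ u * μ₂ x| ≤
          L_R * (D + Dν) * (π x μ₁ u * μ₁ x)
            + M_R * (|π x μ₁ u - π x μ₂ u| * μ₁ x)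
            + M_R * (π x μ₂ u * |μ₁ x - μ₂ x|) := by
        intro x u
        have hdec : r x u μ₁ ν₁ * π x μ₁ u * μ₁ x - r x u μ₂ ν₂ * π x μ₂ u * μ₂ x
            = (r x u μ₁ ν₁ - r x u μ₂ ν₂) * π x μ₁ u * μ₁ x
              + r x u μ₂ ν₂ * (π x μ₁ u - π x μ₂ u) * μ₁ x
              + r x u μ₂ ν₂ * π x μ₂ u * (μ₁ x - μ₂ x) := by ring
        rw [hdec]
        refine le_trans (abs_add_three _ _ _) ?_
        have hb1 : |(r x u μ₁ ν₁ - r x u μ₂ ν₂) * π x μ₁ u * μ₁ x|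
            ≤ L_R * (D + Dν) * (π x μ₁ u * μ₁ x) := by
          rw [abs_mul, abs_mul, abs_of_nonneg ((hπ x μ₁ h₁).1 u),
            abs_of_nonneg (h₁.1 x), mul_assoc]
          have hr := hrLip x u μ₁ μ₂ ν₁ ν₂ h₁ h₂ hν₁ hν₂
          exact mul_le_mul_of_nonneg_right hr
            (mul_nonneg ((hπ x μ₁ h₁).1 u) (h₁.1 x))
        have hb2 : |r x u μ₂ ν₂ * (π x μ₁ u - π x μ₂ u) * μ₁ x|
            ≤ M_R * (|π x μ₁ u - π x μ₂ u| * μ₁ x) := by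
          rw [abs_mul, abs_mul, abs_of_nonneg (h₁.1 x), mul_assoc]
          exact mul_le_mul_of_nonneg_right (hrBd x u μ₂ ν₂ h₂ hν₂)
            (mul_nonneg (abs_nonneg _) (h₁.1 x))
        have hb3 : |r x u μ₂ ν₂ * π x μ₂ u * (μ₁ x - μ₂ x)|
            ≤ M_R * (π x μ₂ u * |μ₁ x - μ₂ x|) := by
          rw [abs_mul, abs_mul, abs_of_nonneg ((hπ x μ₂ h₂).1 u), mul_assoc]
          exact mul_le_mul_of_nonneg_right (hrBd x u μ₂ ν₂ h₂ hν₂)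
            (mul_nonneg ((hπ x μ₂ h₂).1 u) (abs_nonneg _))
        linarith
      have habs : |∑ x, ∑ u,
          (r x u μ₁ ν₁ * π x μ₁ u * μ₁ x - r x u μ₂ ν₂ * π x μ₂ u * μ₂ x)|
          ≤ ∑ x, ∑ u, (L_R * (D + Dν) * (π x μ₁ u * μ₁ x)
            + M_R * (|π x μ₁ u - π x μ₂ u| * μ₁ x)
            + M_R * (π x μ₂ u * |μ₁ x - μ₂ x|)) := by
        refine le_trans (Finset.abs_sum_le_sum_abs _ _) ?_
        refine Finset.sum_le_sum fun x _ => ?_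
        refine le_trans (Finset.abs_sum_le_sum_abs _ _) ?_
        exact Finset.sum_le_sum fun u _ => pointwise x u
      refine le_trans habs ?_
      -- split the triple sum
      simp_rw [Finset.sum_add_distrib]
      have hT1 : ∑ x, ∑ u, L_R * (D + Dν) * (π x μ₁ u * μ₁ x)
          = L_R * (D + Dν) := by
        simp_rw [← Finset.mul_sum, ← Finset.sum_mul]
        have hone : ∑ x, (∑ u, π x μ₁ u) * μ₁ x = 1 := by
          rw [Finset.sum_congr rfl fun x _ => by rw [(hπ x μ₁ h₁).2, one_mul],
            h₁.2]
        rw [hone, mul_one]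
      have hT2 : ∑ x, ∑ u, M_R * (|π x μ₁ u - π x μ₂ u| * μ₁ x)
          ≤ M_R * (L_Q * D) := by
        have step : ∀ x ∈ Finset.univ,
            ∑ u, M_R * (|π x μ₁ u - π x μ₂ u| * μ₁ x)
            ≤ M_R * (L_Q * D) * μ₁ x := by
          intro x _
          simp_rw [← Finset.mul_sum, ← Finset.sum_mul]
          have hs := hπLip x μ₁ μ₂ h₁ h₂
          rw [← hDdef] at hs
          have hμ := h₁.1 x
          nlinarith [mul_nonneg hMR hμ]
        calc ∑ x, ∑ u, M_R * (|π x μ₁ u - π x μ₂ u| * μ₁ x)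
            ≤ ∑ x, M_R * (L_Q * D) * μ₁ x := Finset.sum_le_sum step
          _ = M_R * (L_Q * D) := by rw [← Finset.mul_sum, h₁.2, mul_one]
      have hT3 : ∑ x, ∑ u, M_R * (π x μ₂ u * |μ₁ x - μ₂ x|)
          = M_R * D := by
        have : ∀ x ∈ Finset.univ,
            ∑ u, M_R * (π x μ₂ u * |μ₁ x - μ₂ x|)
            = M_R * |μ₁ x - μ₂ x| := by
          intro x _
          simp_rw [← Finset.mul_sum, ← Finset.sum_mul, (hπ x μ₂ h₂).2, one_mul]
        rw [Finset.sum_congr rfl this, ← Finset.mul_sum, ← hDdef]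
      rw [hT1, hT3]
      linarith
    refine le_trans hmain ?_
    nlinarith [mul_le_mul_of_nonneg_left hDν hLR]
end

section
/- Let M, N be positive integers. For each n ∈ {1,…,N}, let (X_{1,n},…,X_{M,n}) be a random vector with each X_{m,n} ∈ [0,1] almost surely and Σ_{m=1}^M E[X_{m,n}] = 1, and suppose the N random vectors (X_{1,n},…,X_{M,n}), n ∈ {1,…,N}, are mutually independent. Let C_{m,n} be real constants with |C_{m,n}| ≤ C for all m, n. Then Σ_{m=1}^M E| Σ_{n=1}^N C_{m,n}(X_{m,n} − E[X_{m,n}]) | ≤ C√(MN). -/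
open MeasureTheory ProbabilityTheory Finset

/-!
For a fixed row `m`, the summands `C_{m,n} (X_{m,n} - E X_{m,n})` are independent and centred, so
`E|S_m| ≤ √(Var S_m) = √(Σ_n C_{m,n}² Var X_{m,n})`. A `[0,1]`-valued variable has variance at most
its mean (Bhatia–Davis), so `Var S_m ≤ C² Σ_n E X_{m,n}`. Cauchy–Schwarz over the `M` rows then
gives `Σ_m E|S_m| ≤ √(M · C² Σ_{m,n} E X_{m,n}) = C √(MN)`.
-/

section Variance

variable {Ω ι : Type*} {mΩ : MeasurableSpace Ω} {μ : Measure Ω}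

lemma sq_integral_abs_le_integral_sq [IsProbabilityMeasure μ] {f : Ω → ℝ} (hf : MemLp f 2 μ) :
    (∫ ω, |f ω| ∂μ) ^ 2 ≤ ∫ ω, f ω ^ 2 ∂μ := by
  have h := variance_nonneg |f| μ
  rw [variance_eq_sub hf.abs] at h
  simpa [sq_abs] using h

lemma integral_abs_sub_integral_le_sqrt_variance [IsProbabilityMeasure μ] {X : Ω → ℝ}
    (hX : MemLp X 2 μ) : ∫ ω, |X ω - μ[X]| ∂μ ≤ √Var[X; μ] := by
  rw [variance_eq_integral hX.aemeasurable]
  exact Real.le_sqrt_of_sq_le (sq_integral_abs_le_integral_sq (hX.sub (memLp_const _)))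

lemma variance_le_integral_of_mem_Icc [IsProbabilityMeasure μ] {X : Ω → ℝ}
    (hX : AEMeasurable X μ) (h : ∀ᵐ ω ∂μ, X ω ∈ Set.Icc 0 1) : Var[X; μ] ≤ μ[X] := by
  have h_bhatia_davis := variance_le_sub_mul_sub h hX
  nlinarith [sq_nonneg μ[X]]

lemma variance_sum_mul_of_pairwise_indepFun [Fintype ι] {X : ι → Ω → ℝ}
    (hX : ∀ i, MemLp (X i) 2 μ) (hind : Pairwise fun i j => X i ⟂ᵢ[μ] X j) (c : ι → ℝ) :
    Var[fun ω => ∑ i, c i * X i ω; μ] = ∑ i, c i ^ 2 * Var[X i; μ] := by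
  have hsum := IndepFun.variance_sum (s := univ) (fun i _ => (hX i).const_mul (c i))
    fun i _ j _ hij => (hind hij).comp (measurable_const_mul (c i)) (measurable_const_mul (c j))
  rw [show (fun ω => ∑ i, c i * X i ω) = ∑ i, fun ω => c i * X i ω by ext; simp, hsum]
  simp only [variance_const_mul]

lemma integral_abs_sum_mul_sub_integral_le [IsProbabilityMeasure μ] [Fintype ι]
    {X : ι → Ω → ℝ} (hX : ∀ i, MemLp (X i) 2 μ) (hind : Pairwise fun i j => X i ⟂ᵢ[μ] X j)
    (c : ι → ℝ) :
    ∫ ω, |∑ i, c i * (X i ω - μ[X i])| ∂μ ≤ √(∑ i, c i ^ 2 * Var[X i; μ]) := by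
  have hmean : μ[fun ω => ∑ i, c i * X i ω] = ∑ i, c i * μ[X i] := by
    rw [integral_finsetSum _ fun i _ => ((hX i).integrable one_le_two).const_mul (c i)]
    simp only [integral_const_mul]
  calc ∫ ω, |∑ i, c i * (X i ω - μ[X i])| ∂μ
      = ∫ ω, |∑ i, c i * X i ω - μ[fun ω => ∑ i, c i * X i ω]| ∂μ := by
        simp only [hmean, mul_sub, sum_sub_distrib]
    _ ≤ √Var[fun ω => ∑ i, c i * X i ω; μ] :=
        integral_abs_sub_integral_le_sqrt_variance
          (memLp_finsetSum _ fun i _ => (hX i).const_mul (c i))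
    _ = √(∑ i, c i ^ 2 * Var[X i; μ]) := by
        rw [variance_sum_mul_of_pairwise_indepFun hX hind]

end Variance

lemma Real.sum_sqrt_le_sqrt_card_mul_sum {ι : Type*} (s : Finset ι) {f : ι → ℝ}
    (hf : ∀ i, 0 ≤ f i) : ∑ i ∈ s, √(f i) ≤ √(#s * ∑ i ∈ s, f i) := by
  rw [Real.sqrt_mul (Nat.cast_nonneg _)]
  simpa using Real.sum_sqrt_mul_sqrt_le s (fun _ => zero_le_one) hf

/-- Lemma 4: if for each `n` the random vector `(X_{1,n},…,X_{M,n})`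
has `[0,1]`-valued coordinates with `Σ_m E[X_{m,n}] = 1`, the `N` vectors are
mutually independent, and `|C_{m,n}| ≤ C`, then
`Σ_m E|Σ_n C_{m,n}(X_{m,n} − E[X_{m,n}])| ≤ C √(MN)`. -/
theorem sum_abs_expectation_le {Ω : Type*} [MeasureSpace Ω]
    [IsProbabilityMeasure (ℙ : Measure Ω)]
    {M N : ℕ} (hM : 0 < M) (hN : 0 < N)
    (Xr : Fin M → Fin N → Ω → ℝ)
    (hmeas : ∀ m n, Measurable (Xr m n))
    (hbd : ∀ m n, ∀ᵐ ω ∂(ℙ : Measure Ω), Xr m n ω ∈ Set.Icc (0 : ℝ) 1)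
    (hsum : ∀ n, ∑ m, (∫ ω, Xr m n ω) = 1)
    (hind : iIndepFun
      (fun n (ω : Ω) (m : Fin M) => Xr m n ω) ℙ)
    (C : ℝ) (Cc : Fin M → Fin N → ℝ) (hC : ∀ m n, |Cc m n| ≤ C) :
    ∑ m, (∫ ω, |∑ n, Cc m n * (Xr m n ω - ∫ ω', Xr m n ω')|) ≤
      C * Real.sqrt (M * N) := by
  have hC0 : 0 ≤ C := (abs_nonneg _).trans (hC ⟨0, hM⟩ ⟨0, hN⟩)
  have hmem : ∀ m n, MemLp (Xr m n) 2 ℙ := fun m n =>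
    memLp_of_bounded (hbd m n) (hmeas m n).aestronglyMeasurable 2
  have hrow_indep : ∀ m, Pairwise fun n n' => Xr m n ⟂ᵢ[ℙ] Xr m n' := fun m n n' hne =>
    (hind.comp (fun _ v => v m) fun _ => measurable_pi_apply m).indepFun hne
  have hterm : ∀ m n, Cc m n ^ 2 * Var[Xr m n; ℙ] ≤ C ^ 2 * ∫ ω, Xr m n ω := fun m n =>
    mul_le_mul (sq_le_sq.2 ((hC m n).trans (le_abs_self C)))
      (variance_le_integral_of_mem_Icc (hmeas m n).aemeasurable (hbd m n))
      (variance_nonneg _ _) (sq_nonneg C)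
  have hrow : ∀ m, ∫ ω, |∑ n, Cc m n * (Xr m n ω - ∫ ω', Xr m n ω')| ≤
      √(C ^ 2 * ∑ n, ∫ ω, Xr m n ω) := fun m =>
    (integral_abs_sum_mul_sub_integral_le (hmem m) (hrow_indep m) (Cc m)).trans <|
      Real.sqrt_le_sqrt <| (sum_le_sum fun n _ => hterm m n).trans_eq (mul_sum ..).symm
  have hmean_nonneg : ∀ m, 0 ≤ C ^ 2 * ∑ n, ∫ ω, Xr m n ω := fun m =>
    mul_nonneg (sq_nonneg C) <| sum_nonneg fun n _ =>
      integral_nonneg_of_ae ((hbd m n).mono fun _ h => h.1)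
  calc ∑ m, ∫ ω, |∑ n, Cc m n * (Xr m n ω - ∫ ω', Xr m n ω')|
      ≤ ∑ m, √(C ^ 2 * ∑ n, ∫ ω, Xr m n ω) := sum_le_sum fun m _ => hrow m
    _ ≤ √(M * ∑ m, C ^ 2 * ∑ n, ∫ ω, Xr m n ω) := by
        simpa using Real.sum_sqrt_le_sqrt_card_mul_sum univ hmean_nonneg
    _ = C * √(M * N) := by
        rw [← mul_sum, sum_comm]
        simp only [hsum, sum_const, card_univ, Fintype.card_fin, nsmul_eq_mul, mul_one]
        rw [mul_left_comm, Real.sqrt_mul' _ (by positivity), Real.sqrt_sq hC0, mul_comm]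
end

section
/- Let x^1,…,x^N ∈ X be fixed states with empirical distribution μ^N(x) = (1/N) Σ_{i=1}^N δ(x^i = x), let π: X × P(X) → P(U) be any policy, and let u^1,…,u^N be mutually independent random actions with u^i distributed according to π(x^i, μ^N). Let ν^N(u) = (1/N) Σ_{i=1}^N δ(u^i = u) be the empirical action distribution. Then E|ν^N − ν^MF(μ^N, π)|_1 ≤ √|U| / √N. -/
/-- Empirical distribution of `x¹,…,x^N`. -/
noncomputable def empDist {α : Type*} [Fintype α] [DecidableEq α] {N : ℕ}
    (x : Fin N → α) : α → ℝ :=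
  fun s => (1 / (N : ℝ)) * ∑ i, if x i = s then (1 : ℝ) else 0

section Aux

/-- Cauchy–Schwarz in the form `∑ f ≤ √(∑ f²·stuff)` specialized:
if `0 ≤ A` and `A^2 ≤ B` then `A ≤ √B`. -/
lemma le_sqrt_of_sq_le {A B : ℝ} (hA : 0 ≤ A) (h : A ^ 2 ≤ B) : A ≤ Real.sqrt B := by
  calc A = Real.sqrt (A ^ 2) := by rw [Real.sqrt_sq hA]
    _ ≤ Real.sqrt B := Real.sqrt_le_sqrt h

end Aux

/-- Lemma 5: if the actions `u¹,…,u^N` are sampled mutually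
independently with `uⁱ ~ π(xⁱ, μ^N)` (so the expectation over the actions is a
sum over `a : Fin N → U` weighted by `∏ᵢ π(xⁱ,μ^N)(aᵢ)`), then
`E|ν^N − ν^MF(μ^N,π)|₁ ≤ √|U|/√N`. -/
theorem emp_action_dist_close_to_nuMF {X U : Type*}
    [Fintype X] [DecidableEq X] [Fintype U] [DecidableEq U]
    {N : ℕ} (hN : 0 < N) (x : Fin N → X)
    (π : X → (X → ℝ) → U → ℝ)
    (hπ : ∀ x' μ, IsDist μ → IsDist (π x' μ)) :
    ∑ a : Fin N → U, (∏ i, π (x i) (empDist x) (a i)) *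
        (∑ u, |empDist a u - nuMF π (empDist x) u|) ≤
      Real.sqrt (Fintype.card U) / Real.sqrt N := by
  classical
  have hNne : (N : ℝ) ≠ 0 := Nat.cast_ne_zero.mpr hN.ne'
  set μ : X → ℝ := empDist x with hμdef
  -- μ is a distribution
  have hμ : IsDist μ := by
    constructor
    · intro s
      have : (0:ℝ) ≤ ∑ i, if x i = s then (1:ℝ) else 0 :=
        Finset.sum_nonneg fun i _ => by positivity
      simpa [hμdef, empDist] using by positivity
    · simp only [hμdef, empDist]
      rw [← Finset.mul_sum, Finset.sum_comm]
      simp [Finset.sum_ite_eq, hNne]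
  set p : Fin N → U → ℝ := fun i => π (x i) μ with hpdef
  have hp : ∀ i, IsDist (p i) := fun i => hπ _ _ hμ
  set w : (Fin N → U) → ℝ := fun a => ∏ i, p i (a i) with hwdef
  have hw0 : ∀ a, 0 ≤ w a := fun a => Finset.prod_nonneg fun i _ => (hp i).1 _
  have hw1 : ∑ a : Fin N → U, w a = 1 := by
    rw [hwdef, ← Fintype.prod_sum]
    simp [(hp _).2]
  set ν : U → ℝ := nuMF π μ with hνdef
  -- ν u = (1/N) ∑ i, p i u
  have hν : ∀ u, ν u = (1 / N) * ∑ i, p i u := by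
    intro u
    have hμx : ∀ x' : X, μ x' = (1 / (N:ℝ)) * ∑ i, if x i = x' then (1:ℝ) else 0 :=
      fun _ => rfl
    calc ν u = ∑ x', π x' μ u * μ x' := rfl
      _ = ∑ x', ∑ i, (1 / (N:ℝ)) * (if x i = x' then π x' μ u else 0) := by
          refine Finset.sum_congr rfl fun x' _ => ?_
          rw [hμx x', Finset.mul_sum, Finset.mul_sum]
          refine Finset.sum_congr rfl fun i _ => ?_
          by_cases h : x i = x' <;> simp [h, mul_comm]
      _ = ∑ i, ∑ x', (1 / (N:ℝ)) * (if x i = x' then π x' μ u else 0) := Finset.sum_comm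
      _ = (1 / N) * ∑ i, p i u := by
          rw [Finset.mul_sum]
          refine Finset.sum_congr rfl fun i _ => ?_
          rw [← Finset.mul_sum]
          congr 1
          simp [Finset.sum_ite_eq, hpdef]
  have hν0 : ∀ u, 0 ≤ ν u := by
    intro u
    rw [hν u]
    have : (0:ℝ) ≤ ∑ i, p i u := Finset.sum_nonneg fun i _ => (hp i).1 u
    positivity
  have hν1 : ∑ u, ν u = 1 := by
    simp only [hν, ← Finset.mul_sum]
    rw [Finset.sum_comm]
    simp [(hp _).2, hNne]
  -- centered indicator
  set Y : Fin N → U → U → ℝ := fun i u v => (if v = u then 1 else 0) - p i u with hYdef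
  have hD : ∀ (u : U) (a : Fin N → U),
      empDist a u - ν u = (1 / N) * ∑ i, Y i u (a i) := by
    intro u a
    rw [hν u, hYdef]
    simp only [empDist]
    rw [Finset.sum_sub_distrib, mul_sub]
  have hEY : ∀ i u, ∑ v, p i v * Y i u v = 0 := by
    intro i u
    simp only [hYdef, mul_sub, Finset.sum_sub_distrib, ← Finset.sum_mul, (hp i).2,
      mul_ite, mul_one, mul_zero, Finset.sum_ite_eq', Finset.mem_univ, if_true, one_mul]
    ring
  have hEY2 : ∀ i u, ∑ v, p i v * (Y i u v) ^ 2 ≤ p i u := by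
    intro i u
    have h1 : ∑ v, p i v * (if v = u then (1:ℝ) else 0) = p i u := by
      simp [mul_ite, Finset.sum_ite_eq']
    have expand : ∀ v, p i v * (Y i u v) ^ 2 =
        p i v * (if v = u then (1:ℝ) else 0) * (1 - 2 * p i u) + p i u ^ 2 * p i v := by
      intro v
      by_cases h : v = u <;> simp [hYdef, h] <;> ring
    rw [Finset.sum_congr rfl fun v _ => expand v]
    rw [Finset.sum_add_distrib, ← Finset.sum_mul, h1, ← Finset.mul_sum, (hp i).2]
    nlinarith [sq_nonneg (p i u)]
  -- off-diagonal covariance is zero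
  have hT0 : ∀ (u : U) (i j : Fin N), i ≠ j →
      ∑ a : Fin N → U, w a * (Y i u (a i) * Y j u (a j)) = 0 := by
    intro u i j hij
    have key : ∀ a : Fin N → U, w a * (Y i u (a i) * Y j u (a j)) =
        ∏ k, (p k (a k) * ((if k = i then Y i u (a k) else 1) *
          (if k = j then Y j u (a k) else 1))) := by
      intro a
      rw [Finset.prod_mul_distrib, Finset.prod_mul_distrib]
      rw [Finset.prod_ite_eq' Finset.univ i (fun k => Y i u (a k)),
        Finset.prod_ite_eq' Finset.univ j (fun k => Y j u (a k))]
      simp [hwdef]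
    rw [Finset.sum_congr rfl fun a _ => key a,
      ← Fintype.prod_sum (fun k (v : U) => p k v * ((if k = i then Y i u v else 1) *
        if k = j then Y j u v else 1))]
    apply Finset.prod_eq_zero (Finset.mem_univ i)
    have : ∀ v : U, p i v * ((if i = i then Y i u v else 1) *
        (if i = j then Y j u v else 1)) = p i v * Y i u v := by
      intro v; simp [hij]
    rw [Finset.sum_congr rfl fun v _ => this v, hEY]
  -- diagonal term
  have hTd : ∀ (u : U) (i : Fin N),
      ∑ a : Fin N → U, w a * (Y i u (a i) * Y i u (a i)) =
        ∑ v, p i v * (Y i u v) ^ 2 := by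
    intro u i
    have key : ∀ a : Fin N → U, w a * (Y i u (a i) * Y i u (a i)) =
        ∏ k, (p k (a k) * (if k = i then (Y i u (a k)) ^ 2 else 1)) := by
      intro a
      rw [Finset.prod_mul_distrib,
        Finset.prod_ite_eq' Finset.univ i (fun k => (Y i u (a k)) ^ 2)]
      simp only [Finset.mem_univ, if_true, hwdef]
      ring
    rw [Finset.sum_congr rfl fun a _ => key a,
      ← Fintype.prod_sum (fun k (v : U) => p k v * (if k = i then (Y i u v) ^ 2 else 1))]
    have hfac : ∀ k : Fin N, ∑ v, p k v * (if k = i then (Y i u v) ^ 2 else 1) =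
        if k = i then ∑ v, p i v * (Y i u v) ^ 2 else 1 := by
      intro k
      by_cases h : k = i <;> simp [h, (hp k).2]
    rw [Finset.prod_congr rfl fun k _ => hfac k, Finset.prod_ite_eq' Finset.univ i]
    simp
  -- variance bound:  E (D u)² ≤ ν u / N
  have hvar : ∀ u : U, ∑ a : Fin N → U, w a * (empDist a u - ν u) ^ 2 ≤ ν u / N := by
    intro u
    have hsq : ∀ a : Fin N → U, (empDist a u - ν u) ^ 2 =
        (1 / (N:ℝ)) ^ 2 * ∑ i, ∑ j, Y i u (a i) * Y j u (a j) := by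
      intro a
      have : (∑ i, Y i u (a i)) ^ 2 = ∑ i, ∑ j, Y i u (a i) * Y j u (a j) := by
        rw [sq, Finset.sum_mul_sum]
      rw [hD u a, mul_pow, this]
    have swap_wsum : ∀ F : Fin N → (Fin N → U) → ℝ,
        ∑ a : Fin N → U, w a * ∑ i, F i a = ∑ i, ∑ a : Fin N → U, w a * F i a := by
      intro F
      calc ∑ a : Fin N → U, w a * ∑ i, F i a
          = ∑ a : Fin N → U, ∑ i, w a * F i a :=
            Finset.sum_congr rfl fun a _ => Finset.mul_sum _ _ _
        _ = ∑ i, ∑ a : Fin N → U, w a * F i a := Finset.sum_comm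
    calc ∑ a : Fin N → U, w a * (empDist a u - ν u) ^ 2
        = (1 / (N:ℝ)) ^ 2 * ∑ a : Fin N → U,
            w a * ∑ i, ∑ j, Y i u (a i) * Y j u (a j) := by
          rw [Finset.mul_sum]
          exact Finset.sum_congr rfl fun a _ => by rw [hsq a]; ring
      _ = (1 / (N:ℝ)) ^ 2 * ∑ i, ∑ a : Fin N → U,
            w a * ∑ j, Y i u (a i) * Y j u (a j) := by
          rw [swap_wsum (fun i a => ∑ j, Y i u (a i) * Y j u (a j))]
      _ = (1 / (N:ℝ)) ^ 2 * ∑ i, ∑ j, ∑ a : Fin N → U, w a * (Y i u (a i) * Y j u (a j)) := by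
          congr 1
          exact Finset.sum_congr rfl fun i _ =>
            swap_wsum (fun j a => Y i u (a i) * Y j u (a j))
      _ = (1 / (N:ℝ)) ^ 2 * ∑ i, ∑ v, p i v * (Y i u v) ^ 2 := by
          congr 1
          refine Finset.sum_congr rfl fun i _ => ?_
          rw [Finset.sum_eq_single_of_mem i (Finset.mem_univ i)
            (fun j _ hj => hT0 u i j (Ne.symm hj)), hTd]
      _ ≤ (1 / (N:ℝ)) ^ 2 * ∑ i, p i u := by
          apply mul_le_mul_of_nonneg_left
            (Finset.sum_le_sum fun i _ => hEY2 i u) (by positivity)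
      _ = ν u / N := by rw [hν u]; ring
  -- per-coordinate L1 bound via Cauchy–Schwarz over a
  have hA : ∀ u : U, ∑ a : Fin N → U, w a * |empDist a u - ν u| ≤ Real.sqrt (ν u / N) := by
    intro u
    apply le_sqrt_of_sq_le (Finset.sum_nonneg fun a _ => mul_nonneg (hw0 a) (abs_nonneg _))
    have cs := Finset.sum_mul_sq_le_sq_mul_sq Finset.univ
      (fun a : Fin N → U => Real.sqrt (w a))
      (fun a : Fin N → U => Real.sqrt (w a) * |empDist a u - ν u|)
    have e1 : ∀ a : Fin N → U, Real.sqrt (w a) * (Real.sqrt (w a) * |empDist a u - ν u|) =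
        w a * |empDist a u - ν u| := by
      intro a; rw [← mul_assoc, Real.mul_self_sqrt (hw0 a)]
    have e2 : ∀ a : Fin N → U, (Real.sqrt (w a)) ^ 2 = w a := fun a => Real.sq_sqrt (hw0 a)
    have e3 : ∀ a : Fin N → U, (Real.sqrt (w a) * |empDist a u - ν u|) ^ 2 =
        w a * (empDist a u - ν u) ^ 2 := by
      intro a; rw [mul_pow, Real.sq_sqrt (hw0 a), sq_abs]
    rw [Finset.sum_congr rfl fun a _ => e1 a, Finset.sum_congr rfl fun a _ => e2 a,
      Finset.sum_congr rfl fun a _ => e3 a, hw1, one_mul] at cs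
    exact cs.trans (hvar u)
  -- put everything together
  have swap : ∑ a : Fin N → U, w a * (∑ u, |empDist a u - ν u|) =
      ∑ u, ∑ a : Fin N → U, w a * |empDist a u - ν u| := by
    rw [Finset.sum_comm]
    exact Finset.sum_congr rfl fun a _ => Finset.mul_sum _ _ _
  have step1 : ∑ a : Fin N → U, w a * (∑ u, |empDist a u - ν u|) ≤
      ∑ u, Real.sqrt (ν u / N) := by
    rw [swap]; exact Finset.sum_le_sum fun u _ => hA u
  have step2 : ∑ u, Real.sqrt (ν u / N) ≤
      Real.sqrt (Fintype.card U) * Real.sqrt (∑ u, ν u / N) := by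
    rw [← Real.sqrt_mul (by positivity)]
    apply le_sqrt_of_sq_le (Finset.sum_nonneg fun u _ => Real.sqrt_nonneg _)
    have cs := Finset.sum_mul_sq_le_sq_mul_sq Finset.univ
      (fun _ : U => (1:ℝ)) (fun u : U => Real.sqrt (ν u / N))
    simp only [one_mul, one_pow] at cs
    calc (∑ u, Real.sqrt (ν u / N)) ^ 2 ≤
        (∑ _u : U, (1:ℝ)) * ∑ u, (Real.sqrt (ν u / N)) ^ 2 := cs
      _ = (Fintype.card U : ℝ) * ∑ u, ν u / N := by
          rw [Finset.sum_const, Finset.card_univ]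
          congr 1
          · simp
          · exact Finset.sum_congr rfl fun u _ =>
              Real.sq_sqrt (div_nonneg (hν0 u) (Nat.cast_nonneg N))
  have final : Real.sqrt (Fintype.card U) * Real.sqrt (∑ u, ν u / N) =
      Real.sqrt (Fintype.card U) / Real.sqrt N := by
    rw [← Finset.sum_div, hν1]
    rw [one_div, Real.sqrt_inv, div_eq_mul_inv]
  calc ∑ a : Fin N → U, (∏ i, π (x i) (empDist x) (a i)) *
        (∑ u, |empDist a u - nuMF π (empDist x) u|)
      = ∑ a : Fin N → U, w a * (∑ u, |empDist a u - ν u|) := rfl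
    _ ≤ ∑ u, Real.sqrt (ν u / N) := step1
    _ ≤ Real.sqrt (Fintype.card U) * Real.sqrt (∑ u, ν u / N) := step2
    _ = Real.sqrt (Fintype.card U) / Real.sqrt N := final
end

section
/- Let W be an N×N doubly stochastic matrix, let r(x,u,μ,ν) = a^T μ + b^T ν + f(x,u) with |f(x,u)| ≤ M_F for all x, u. Let x^1,…,x^N ∈ X be fixed states with empirical distribution μ^N, let π: X × P(X) → P(U) be any policy, let u^1,…,u^N be mutually independent with u^i ~ π(x^i, μ^N), and let μ^{i,N}, ν^{i,N} be the W-weighted state and action distributions seen by agent i. Then E| (1/N) Σ_{i=1}^N r(x^i, u^i, μ^{i,N}, ν^{i,N}) − r^MF(μ^N, π) | ≤ (|b|_1 + M_F) √|U| / √N. -/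
/-- `W`-weighted distribution seen by agent `i`:
`μ^{i,N}(s) = Σ_j W(i,j) δ(xʲ = s)`. -/
noncomputable def wDist {α : Type*} [Fintype α] [DecidableEq α] {N : ℕ}
    (W : Fin N → Fin N → ℝ) (x : Fin N → α) (i : Fin N) : α → ℝ :=
  fun s => ∑ j, W i j * if x j = s then (1 : ℝ) else 0

lemma exp_abs_sum_le {U : Type*} [Fintype U] [DecidableEq U] {N : ℕ} (hN : 0 < N)
    (p : Fin N → U → ℝ) (hp0 : ∀ i u, 0 ≤ p i u) (hp1 : ∀ i, ∑ u, p i u = 1)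
    (Y : Fin N → U → ℝ) (hY0 : ∀ i, ∑ u, p i u * Y i u = 0)
    (C : ℝ) (hC : 0 ≤ C) (hYvar : ∀ i, ∑ u, p i u * (Y i u) ^ 2 ≤ C ^ 2) :
    ∑ act : Fin N → U, (∏ i, p i (act i)) * |(1 / (N : ℝ)) * ∑ i, Y i (act i)| ≤
      C / Real.sqrt N := by
  classical
  have hNR : (0:ℝ) < N := Nat.cast_pos.mpr hN
  have hP0 : ∀ act : Fin N → U, 0 ≤ ∏ i, p i (act i) :=
    fun act => Finset.prod_nonneg fun i _ => hp0 i (act i)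
  have hprod : ∀ h : Fin N → U → ℝ,
      ∑ act : Fin N → U, ∏ i, h i (act i) = ∏ i, ∑ u, h i u := by
    intro h
    rw [Finset.prod_univ_sum, Fintype.piFinset_univ]
  have hP1 : ∑ act : Fin N → U, ∏ i, p i (act i) = 1 := by
    rw [hprod p]
    simp [hp1]
  have hsplit : ∀ i j : Fin N, ∑ act : Fin N → U,
      (∏ k, p k (act k)) * Y i (act i) * Y j (act j)
      = ∏ k, ∑ u, p k u * (if i = k then Y i u else 1) * (if j = k then Y j u else 1) := by
    intro i j
    rw [← hprod]
    refine Finset.sum_congr rfl fun act _ => ?_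
    rw [Finset.prod_mul_distrib, Finset.prod_mul_distrib]
    simp [Finset.prod_ite_eq]
  have hoff : ∀ i j : Fin N, i ≠ j → ∑ act : Fin N → U,
      (∏ k, p k (act k)) * Y i (act i) * Y j (act j) = 0 := by
    intro i j hij
    rw [hsplit i j]
    apply Finset.prod_eq_zero (Finset.mem_univ i)
    simp only [if_pos rfl, if_neg (Ne.symm hij), mul_one]
    exact hY0 i
  have hdiag : ∀ i : Fin N, ∑ act : Fin N → U,
      (∏ k, p k (act k)) * Y i (act i) * Y i (act i) = ∑ u, p i u * (Y i u) ^ 2 := by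
    intro i
    rw [hsplit i i]
    rw [Finset.prod_eq_single i (fun k _ hk => by
      simp only [if_neg (fun h : i = k => hk h.symm), mul_one]
      exact hp1 k) (fun h => absurd (Finset.mem_univ i) h)]
    refine Finset.sum_congr rfl fun u _ => ?_
    rw [if_pos rfl]
    ring
  have ESq : ∑ act : Fin N → U, (∏ k, p k (act k)) * (∑ i, Y i (act i)) ^ 2
      ≤ N * C ^ 2 := by
    have expand : ∑ act : Fin N → U, (∏ k, p k (act k)) * (∑ i, Y i (act i)) ^ 2
        = ∑ i, ∑ j, ∑ act : Fin N → U, (∏ k, p k (act k)) * Y i (act i) * Y j (act j) := by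
      have e1 : ∀ act : Fin N → U, (∏ k, p k (act k)) * (∑ i, Y i (act i)) ^ 2
          = ∑ i, ∑ j, (∏ k, p k (act k)) * Y i (act i) * Y j (act j) := by
        intro act
        rw [sq, Finset.sum_mul_sum, Finset.mul_sum]
        refine Finset.sum_congr rfl fun i _ => ?_
        rw [Finset.mul_sum]
        exact Finset.sum_congr rfl fun j _ => by ring
      rw [Finset.sum_congr rfl fun act _ => e1 act, Finset.sum_comm]
      exact Finset.sum_congr rfl fun i _ => Finset.sum_comm
    rw [expand]
    calc ∑ i, ∑ j, ∑ act : Fin N → U, (∏ k, p k (act k)) * Y i (act i) * Y j (act j)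
        = ∑ i, ∑ u, p i u * (Y i u) ^ 2 := by
          refine Finset.sum_congr rfl fun i _ => ?_
          rw [Finset.sum_eq_single i (fun j _ hj => hoff i j (Ne.symm hj))
            (fun h => absurd (Finset.mem_univ i) h)]
          exact hdiag i
      _ ≤ ∑ _i : Fin N, C ^ 2 := Finset.sum_le_sum fun i _ => hYvar i
      _ = N * C ^ 2 := by
          rw [Finset.sum_const, Finset.card_univ, Fintype.card_fin, nsmul_eq_mul]
  have habs : ∑ act : Fin N → U, (∏ k, p k (act k)) * |∑ i, Y i (act i)|
      ≤ Real.sqrt N * C := by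
    have hcs := Finset.sum_mul_sq_le_sq_mul_sq Finset.univ
      (fun act : Fin N → U => Real.sqrt (∏ k, p k (act k)))
      (fun act : Fin N → U => Real.sqrt (∏ k, p k (act k)) * |∑ i, Y i (act i)|)
    have e1 : ∀ act : Fin N → U, Real.sqrt (∏ k, p k (act k)) *
        (Real.sqrt (∏ k, p k (act k)) * |∑ i, Y i (act i)|)
        = (∏ k, p k (act k)) * |∑ i, Y i (act i)| := fun act => by
      rw [← mul_assoc, Real.mul_self_sqrt (hP0 act)]
    have e2 : ∀ act : Fin N → U, Real.sqrt (∏ k, p k (act k)) ^ 2 = ∏ k, p k (act k) :=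
      fun act => Real.sq_sqrt (hP0 act)
    have e3 : ∀ act : Fin N → U, (Real.sqrt (∏ k, p k (act k)) * |∑ i, Y i (act i)|) ^ 2
        = (∏ k, p k (act k)) * (∑ i, Y i (act i)) ^ 2 := fun act => by
      rw [mul_pow, e2, sq_abs]
    rw [Finset.sum_congr rfl fun act _ => e1 act] at hcs
    rw [Finset.sum_congr rfl fun act _ => e2 act] at hcs
    rw [Finset.sum_congr rfl fun act _ => e3 act] at hcs
    rw [hP1, one_mul] at hcs
    have h2 : (∑ act : Fin N → U, (∏ k, p k (act k)) * |∑ i, Y i (act i)|) ^ 2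
        ≤ (Real.sqrt N * C) ^ 2 := by
      refine hcs.trans (ESq.trans ?_)
      rw [mul_pow, Real.sq_sqrt hNR.le]
    have hnn : 0 ≤ ∑ act : Fin N → U, (∏ k, p k (act k)) * |∑ i, Y i (act i)| :=
      Finset.sum_nonneg fun act _ => mul_nonneg (hP0 act) (abs_nonneg _)
    have hnn2 : 0 ≤ Real.sqrt N * C := mul_nonneg (Real.sqrt_nonneg _) hC
    nlinarith [h2, hnn, hnn2]
  have hs : Real.sqrt (N:ℝ) * Real.sqrt (N:ℝ) = (N:ℝ) := Real.mul_self_sqrt hNR.le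
  have hs0 : (0:ℝ) < Real.sqrt N := Real.sqrt_pos.mpr hNR
  calc ∑ act : Fin N → U, (∏ k, p k (act k)) * |(1 / (N : ℝ)) * ∑ i, Y i (act i)|
      = (1 / (N:ℝ)) * ∑ act : Fin N → U, (∏ k, p k (act k)) * |∑ i, Y i (act i)| := by
        rw [Finset.mul_sum]
        refine Finset.sum_congr rfl fun act _ => ?_
        rw [abs_mul, abs_of_pos (by positivity : (0:ℝ) < 1 / (N:ℝ))]
        ring
    _ ≤ (1 / (N:ℝ)) * (Real.sqrt N * C) :=
        mul_le_mul_of_nonneg_left habs (by positivity)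
    _ = C / Real.sqrt N := by
        rw [eq_div_iff (ne_of_gt hs0)]
        field_simp
        linear_combination C * hs

/-- Lemma 7: with a doubly stochastic interaction matrix `W` and an
affine reward `r(x,u,μ,ν) = aᵀμ + bᵀν + f(x,u)`, `|f| ≤ M_F`, actions sampled
mutually independently with `uⁱ ~ π(xⁱ,μ^N)`, one has
`E|(1/N) Σᵢ r(xⁱ,uⁱ,μ^{i,N},ν^{i,N}) − r^MF(μ^N,π)| ≤ (|b|₁ + M_F)√|U|/√N`. -/
theorem avg_reward_close_to_rMF {X U : Type*}
    [Fintype X] [DecidableEq X] [Fintype U] [DecidableEq U]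
    {N : ℕ} (hN : 0 < N)
    (W : Fin N → Fin N → ℝ) (hW0 : ∀ i j, 0 ≤ W i j)
    (hWrow : ∀ i, ∑ j, W i j = 1) (hWcol : ∀ j, ∑ i, W i j = 1)
    (a : X → ℝ) (b : U → ℝ) (f : X → U → ℝ) (M_F : ℝ)
    (hf : ∀ x u, |f x u| ≤ M_F)
    (x : Fin N → X)
    (π : X → (X → ℝ) → U → ℝ)
    (hπ : ∀ x' μ, IsDist μ → IsDist (π x' μ)) :
    ∑ act : Fin N → U, (∏ i, π (x i) (empDist x) (act i)) *
        |(1 / (N : ℝ)) * (∑ i, ((∑ s, a s * wDist W x i s) +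
            (∑ v, b v * wDist W act i v) + f (x i) (act i))) -
          rMF (fun x' u' μ ν => (∑ s, a s * μ s) + (∑ v, b v * ν v) + f x' u')
            π (empDist x)| ≤
      ((∑ v, |b v|) + M_F) * Real.sqrt (Fintype.card U) / Real.sqrt N := by
  classical
  have hNR : (0:ℝ) < N := Nat.cast_pos.mpr hN
  rcases isEmpty_or_nonempty U with hU | hU
  · haveI : IsEmpty (Fin N → U) := ⟨fun F => hU.false (F ⟨0, hN⟩)⟩
    rw [Finset.univ_eq_empty (α := Fin N → U), Finset.sum_empty]
    simp [Fintype.card_eq_zero]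
  obtain ⟨u0⟩ := id hU
  have hM : 0 ≤ M_F := (abs_nonneg _).trans (hf (x ⟨0, hN⟩) u0)
  set μ : X → ℝ := empDist x with hμdef
  have hμ : IsDist μ := by
    constructor
    · intro s
      refine mul_nonneg (by positivity) (Finset.sum_nonneg fun i _ => ?_)
      split <;> norm_num
    · show ∑ s, (1 / (N:ℝ)) * ∑ i, (if x i = s then (1:ℝ) else 0) = 1
      rw [← Finset.mul_sum, Finset.sum_comm]
      have e : ∀ i : Fin N, ∑ s, (if x i = s then (1:ℝ) else 0) = 1 := fun i => by simp
      rw [Finset.sum_congr rfl fun i _ => e i, Finset.sum_const, Finset.card_univ,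
        Fintype.card_fin, nsmul_eq_mul, mul_one]
      field_simp
  have hπ1 : ∀ x', ∑ u, π x' μ u = 1 := fun x' => (hπ x' μ hμ).2
  have hπ0 : ∀ x' u, 0 ≤ π x' μ u := fun x' => (hπ x' μ hμ).1
  -- empirical sum lemma
  have hemp : ∀ h : X → ℝ, ∑ s, h s * μ s = (1 / (N:ℝ)) * ∑ i, h (x i) := by
    intro h
    have step : ∀ s, h s * μ s = (1 / (N:ℝ)) * ∑ i, (if x i = s then h s else 0) := by
      intro s
      show h s * ((1 / (N:ℝ)) * _) = _
      rw [mul_left_comm]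
      congr 1
      rw [Finset.mul_sum]
      exact Finset.sum_congr rfl fun i _ => by split <;> simp
    rw [Finset.sum_congr rfl fun s _ => step s, ← Finset.mul_sum, Finset.sum_comm]
    congr 1
    exact Finset.sum_congr rfl fun i _ => by simp
  set A : ℝ := ∑ s, a s * μ s with hA
  set m : Fin N → ℝ := fun i => ∑ u, (b u + f (x i) u) * π (x i) μ u with hm
  -- a-term
  have h1 : (1 / (N:ℝ)) * ∑ i, ∑ s, a s * wDist W x i s = A := by
    have e : ∑ i, ∑ s, a s * wDist W x i s
        = ∑ s, a s * ∑ j, (if x j = s then (1:ℝ) else 0) := by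
      rw [Finset.sum_comm]
      refine Finset.sum_congr rfl fun s _ => ?_
      rw [← Finset.mul_sum]
      congr 1
      show ∑ i, ∑ j, W i j * (if x j = s then (1:ℝ) else 0) = _
      rw [Finset.sum_comm]
      refine Finset.sum_congr rfl fun j _ => ?_
      rw [← Finset.sum_mul, hWcol j, one_mul]
    rw [e, Finset.mul_sum, hA]
    refine Finset.sum_congr rfl fun s _ => ?_
    show (1 / (N:ℝ)) * (a s * ∑ j, (if x j = s then (1:ℝ) else 0))
        = a s * ((1 / (N:ℝ)) * ∑ j, (if x j = s then (1:ℝ) else 0))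
    ring
  -- b-term
  have h2 : ∀ act : Fin N → U, ∑ i, ∑ v, b v * wDist W act i v = ∑ j, b (act j) := by
    intro act
    have e : ∀ v, ∑ i, b v * wDist W act i v = ∑ j, (if act j = v then b v else 0) := by
      intro v
      rw [← Finset.mul_sum]
      show b v * ∑ i, ∑ j, W i j * (if act j = v then (1:ℝ) else 0) = _
      rw [Finset.sum_comm, Finset.mul_sum]
      refine Finset.sum_congr rfl fun j _ => ?_
      rw [← Finset.sum_mul, hWcol j, one_mul, mul_ite, mul_one, mul_zero]
    rw [Finset.sum_comm, Finset.sum_congr rfl fun v _ => e v, Finset.sum_comm]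
    exact Finset.sum_congr rfl fun j _ => by simp
  -- mean-field reward
  have hBsum : ∑ v, b v * nuMF π μ v = ∑ x', (∑ v, b v * π x' μ v) * μ x' := by
    simp only [nuMF]
    calc ∑ v, b v * ∑ x', π x' μ v * μ x'
        = ∑ v, ∑ x', b v * (π x' μ v * μ x') := by
          exact Finset.sum_congr rfl fun v _ => Finset.mul_sum _ _ _
      _ = ∑ x', ∑ v, b v * (π x' μ v * μ x') := Finset.sum_comm
      _ = ∑ x', (∑ v, b v * π x' μ v) * μ x' := by
          refine Finset.sum_congr rfl fun x' _ => ?_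
          rw [Finset.sum_mul]
          exact Finset.sum_congr rfl fun v _ => by ring
  have hr : rMF (fun x' u' μ' ν => (∑ s, a s * μ' s) + (∑ v, b v * ν v) + f x' u') π μ
      = A + (1 / (N:ℝ)) * ∑ i, m i := by
    simp only [rMF]
    set B : ℝ := ∑ v, b v * nuMF π μ v with hB
    have step1 : ∀ x', ∑ u, ((∑ s, a s * μ s) + B + f x' u) * π x' μ u * μ x'
        = (A + B + ∑ u, f x' u * π x' μ u) * μ x' := by
      intro x'
      rw [← Finset.sum_mul]
      congr 1
      have e : ∀ u, ((∑ s, a s * μ s) + B + f x' u) * π x' μ u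
          = (A + B) * π x' μ u + f x' u * π x' μ u := fun u => by rw [← hA]; ring
      rw [Finset.sum_congr rfl fun u _ => e u, Finset.sum_add_distrib, ← Finset.mul_sum,
        hπ1 x', mul_one]
    rw [Finset.sum_congr rfl fun x' _ => step1 x']
    calc ∑ x', (A + B + ∑ u, f x' u * π x' μ u) * μ x'
        = (A + B) * ∑ x', μ x' + ∑ x', (∑ u, f x' u * π x' μ u) * μ x' := by
          rw [Finset.mul_sum, ← Finset.sum_add_distrib]
          exact Finset.sum_congr rfl fun x' _ => by ring
      _ = A + (B + ∑ x', (∑ u, f x' u * π x' μ u) * μ x') := by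
          rw [hμ.2, mul_one]; ring
      _ = A + ∑ x', (∑ u, (b u + f x' u) * π x' μ u) * μ x' := by
          rw [hBsum, ← Finset.sum_add_distrib]
          congr 1
          refine Finset.sum_congr rfl fun x' _ => ?_
          rw [← add_mul, ← Finset.sum_add_distrib]
          congr 1
          exact Finset.sum_congr rfl fun u _ => by ring
      _ = A + (1 / (N:ℝ)) * ∑ i, m i := by
          congr 1
          exact hemp (fun x' => ∑ u, (b u + f x' u) * π x' μ u)
  -- difference identity
  have hD : ∀ act : Fin N → U,
      (1 / (N : ℝ)) * (∑ i, ((∑ s, a s * wDist W x i s) +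
          (∑ v, b v * wDist W act i v) + f (x i) (act i))) -
        rMF (fun x' u' μ' ν => (∑ s, a s * μ' s) + (∑ v, b v * ν v) + f x' u') π μ
      = (1 / (N:ℝ)) * ∑ i, (b (act i) + f (x i) (act i) - m i) := by
    intro act
    rw [Finset.sum_add_distrib, Finset.sum_add_distrib, hr]
    have e : ∑ i, (b (act i) + f (x i) (act i) - m i)
        = (∑ i, b (act i) + ∑ i, f (x i) (act i)) - ∑ i, m i := by
      rw [Finset.sum_sub_distrib, Finset.sum_add_distrib]
    rw [e, ← h2 act]
    have := h1
    rw [mul_add, mul_add, h1]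
    ring
  -- constants
  set C : ℝ := (∑ v, |b v|) + M_F with hC
  have hCnn : 0 ≤ C := add_nonneg (Finset.sum_nonneg fun v _ => abs_nonneg _) hM
  have hb : ∀ u : U, |b u| ≤ ∑ v, |b v| :=
    fun u => Finset.single_le_sum (f := fun v => |b v|) (fun v _ => abs_nonneg _)
      (Finset.mem_univ u)
  have hg : ∀ i u, |b u + f (x i) u| ≤ C :=
    fun i u => (abs_add_le _ _).trans (add_le_add (hb u) (hf _ u))
  -- mean zero
  have hY0 : ∀ i, ∑ u, π (x i) μ u * (b u + f (x i) u - m i) = 0 := by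
    intro i
    have e : ∀ u, π (x i) μ u * (b u + f (x i) u - m i)
        = (b u + f (x i) u) * π (x i) μ u - m i * π (x i) μ u := fun u => by ring
    rw [Finset.sum_congr rfl fun u _ => e u, Finset.sum_sub_distrib, ← Finset.mul_sum,
      hπ1, mul_one, hm]
    exact sub_self _
  -- variance bound
  have hYvar : ∀ i, ∑ u, π (x i) μ u * (b u + f (x i) u - m i) ^ 2 ≤ C ^ 2 := by
    intro i
    have key : ∑ u, π (x i) μ u * (b u + f (x i) u - m i) ^ 2
        = (∑ u, π (x i) μ u * (b u + f (x i) u) ^ 2) - (m i) ^ 2 := by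
      have e : ∀ u, π (x i) μ u * (b u + f (x i) u - m i) ^ 2
          = π (x i) μ u * (b u + f (x i) u) ^ 2
            - 2 * m i * ((b u + f (x i) u) * π (x i) μ u)
            + m i ^ 2 * π (x i) μ u := fun u => by ring
      rw [Finset.sum_congr rfl fun u _ => e u, Finset.sum_add_distrib,
        Finset.sum_sub_distrib, ← Finset.mul_sum, ← Finset.mul_sum, hπ1, mul_one,
        show (∑ u, (b u + f (x i) u) * π (x i) μ u) = m i from rfl]
      ring
    rw [key]
    have hb2 : ∑ u, π (x i) μ u * (b u + f (x i) u) ^ 2 ≤ C ^ 2 := by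
      calc ∑ u, π (x i) μ u * (b u + f (x i) u) ^ 2
          ≤ ∑ u, π (x i) μ u * C ^ 2 := by
            refine Finset.sum_le_sum fun u _ => ?_
            refine mul_le_mul_of_nonneg_left ?_ (hπ0 _ u)
            rw [← sq_abs]
            exact pow_le_pow_left₀ (abs_nonneg _) (hg i u) 2
        _ = C ^ 2 := by rw [← Finset.sum_mul, hπ1, one_mul]
    nlinarith [sq_nonneg (m i)]
  -- conclude
  calc ∑ act : Fin N → U, (∏ i, π (x i) μ (act i)) *
        |(1 / (N : ℝ)) * (∑ i, ((∑ s, a s * wDist W x i s) +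
            (∑ v, b v * wDist W act i v) + f (x i) (act i))) -
          rMF (fun x' u' μ' ν => (∑ s, a s * μ' s) + (∑ v, b v * ν v) + f x' u') π μ|
      = ∑ act : Fin N → U, (∏ i, π (x i) μ (act i)) *
          |(1 / (N:ℝ)) * ∑ i, (b (act i) + f (x i) (act i) - m i)| :=
        Finset.sum_congr rfl fun act _ => by rw [hD act]
    _ ≤ C / Real.sqrt N :=
        exp_abs_sum_le hN (fun i u => π (x i) μ u) (fun i u => hπ0 _ u)
          (fun i => hπ1 _) (fun i u => b u + f (x i) u - m i) hY0 C hCnn hYvar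
    _ ≤ C * Real.sqrt (Fintype.card U) / Real.sqrt N := by
        gcongr
        refine le_mul_of_one_le_right hCnn ?_
        rw [show (1:ℝ) = Real.sqrt 1 from Real.sqrt_one.symm]
        exact Real.sqrt_le_sqrt (by exact_mod_cast Fintype.card_pos (α := U))
end

section
/- Let x^1,…,x^N ∈ X be fixed states with empirical distribution μ^N, let π: X × P(X) → P(U) be any policy, let u^1,…,u^N be mutually independent with u^i ~ π(x^i, μ^N), and let f: X × U → R satisfy |f(x,u)| ≤ M_F for all x, u. Then (1/N) E| Σ_{i=1}^N f(x^i, u^i) − Σ_{i=1}^N Σ_{u∈U} f(x^i, u) π(x^i, μ^N)(u) | ≤ M_F √|U| / √N. -/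
lemma aux_sum_prod {N : ℕ} {U : Type*} [Fintype U] [DecidableEq U] (h : Fin N → U → ℝ) :
    ∑ a : Fin N → U, ∏ k, h k (a k) = ∏ k, ∑ u, h k u := by
  rw [Finset.prod_univ_sum]
  simp

lemma main_aux {U : Type*} [Fintype U] [DecidableEq U] [Nonempty U] {N : ℕ} (hN : 0 < N)
    (p : Fin N → U → ℝ) (hp0 : ∀ i u, 0 ≤ p i u) (hp1 : ∀ i, ∑ u, p i u = 1)
    (F : Fin N → U → ℝ) (M : ℝ) (hF : ∀ i u, |F i u| ≤ M) :
    (1 / (N : ℝ)) * ∑ a : Fin N → U,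
        (∏ j, p j (a j)) * |(∑ i, F i (a i)) - ∑ i, ∑ u, F i u * p i u| ≤
      M / Real.sqrt N := by
  have hM0 : 0 ≤ M := le_trans (abs_nonneg _) (hF ⟨0, hN⟩ (Classical.arbitrary U))
  set m : Fin N → ℝ := fun i => ∑ u, F i u * p i u with hmdef
  set g : Fin N → U → ℝ := fun i u => F i u - m i with hgdef
  set w : (Fin N → U) → ℝ := fun a => ∏ j, p j (a j) with hwdef
  set S : (Fin N → U) → ℝ := fun a => ∑ i, g i (a i) with hSdef
  have hw0 : ∀ a, 0 ≤ w a := fun a => Finset.prod_nonneg fun j _ => hp0 j (a j)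
  have hw1 : ∑ a : Fin N → U, w a = 1 := by
    simp only [hwdef]
    rw [aux_sum_prod p]
    simp [hp1]
  have habs : ∀ a : Fin N → U, (∑ i, F i (a i)) - ∑ i, m i = S a := by
    intro a
    simp only [hSdef, hgdef]
    rw [Finset.sum_sub_distrib]
  have hzero : ∀ i, ∑ u, p i u * g i u = 0 := by
    intro i
    simp only [hgdef, mul_sub]
    rw [Finset.sum_sub_distrib, ← Finset.sum_mul, hp1, one_mul, hmdef, sub_eq_zero]
    exact Finset.sum_congr rfl fun u _ => mul_comm _ _
  have hvar : ∀ i, ∑ u, p i u * (g i u) ^ 2 ≤ M ^ 2 := by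
    intro i
    have hexp : ∑ u, p i u * (g i u) ^ 2
        = (∑ u, p i u * (F i u) ^ 2) - 2 * m i * (∑ u, p i u * F i u)
          + (m i) ^ 2 * (∑ u, p i u) := by
      have e : ∀ u, p i u * (g i u) ^ 2
          = p i u * (F i u) ^ 2 - 2 * m i * (p i u * F i u) + (m i) ^ 2 * p i u := by
        intro u; simp only [hgdef]; ring
      rw [Finset.sum_congr rfl fun u _ => e u, Finset.sum_add_distrib,
        Finset.sum_sub_distrib, ← Finset.mul_sum, ← Finset.mul_sum]
    have hpF : ∑ u, p i u * F i u = m i := by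
      simp only [hmdef]
      exact Finset.sum_congr rfl fun u _ => mul_comm _ _
    rw [hexp, hpF, hp1]
    have h2 : ∑ u, p i u * (F i u) ^ 2 ≤ ∑ u, p i u * M ^ 2 := by
      apply Finset.sum_le_sum; intro u _
      have hab := abs_le.mp (hF i u)
      have hsq : (F i u) ^ 2 ≤ M ^ 2 := sq_le_sq' (by linarith [hab.1]) hab.2
      exact mul_le_mul_of_nonneg_left hsq (hp0 i u)
    have h3 : ∑ u, p i u * M ^ 2 = M ^ 2 := by rw [← Finset.sum_mul, hp1, one_mul]
    rw [h3] at h2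
    nlinarith [sq_nonneg (m i)]
  have hterm : ∀ i j : Fin N, ∑ a : Fin N → U, w a * (g i (a i) * g j (a j))
      = if i = j then ∑ u, p i u * (g i u) ^ 2 else 0 := by
    intro i j
    have hre : ∀ a : Fin N → U, w a * (g i (a i) * g j (a j))
        = ∏ k, (p k (a k) *
            ((if k = i then g i (a k) else 1) * (if k = j then g j (a k) else 1))) := by
      intro a
      rw [Finset.prod_mul_distrib, Finset.prod_mul_distrib, Finset.prod_ite_eq',
        Finset.prod_ite_eq']
      simp only [Finset.mem_univ, if_true, hwdef]
    have haux := aux_sum_prod (fun k u => p k u *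
      ((if k = i then g i u else 1) * (if k = j then g j u else 1)))
    rw [Finset.sum_congr rfl fun a _ => hre a, haux]
    by_cases hij : i = j
    · subst hij
      rw [if_pos rfl]
      rw [Finset.prod_eq_single i]
      · apply Finset.sum_congr rfl; intro u _
        simp [pow_two]
      · intro k _ hk
        simp only [if_neg hk, mul_one, hp1]
      · simp
    · rw [if_neg hij]
      apply Finset.prod_eq_zero (Finset.mem_univ i)
      simpa [hij] using hzero i
  have hsq : ∑ a : Fin N → U, w a * (S a) ^ 2 = ∑ i, ∑ u, p i u * (g i u) ^ 2 := by
    calc ∑ a : Fin N → U, w a * (S a) ^ 2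
        = ∑ a : Fin N → U, ∑ i, ∑ j, w a * (g i (a i) * g j (a j)) := by
          apply Finset.sum_congr rfl; intro a _
          simp only [hSdef]
          rw [sq, Finset.sum_mul_sum, Finset.mul_sum]
          exact Finset.sum_congr rfl fun i _ => by rw [Finset.mul_sum]
      _ = ∑ i, ∑ j, ∑ a : Fin N → U, w a * (g i (a i) * g j (a j)) := by
          rw [Finset.sum_comm]
          exact Finset.sum_congr rfl fun i _ => Finset.sum_comm
      _ = ∑ i, ∑ j, if i = j then ∑ u, p i u * (g i u) ^ 2 else 0 :=
          Finset.sum_congr rfl fun i _ => Finset.sum_congr rfl fun j _ => hterm i j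
      _ = ∑ i, ∑ u, p i u * (g i u) ^ 2 := by
          apply Finset.sum_congr rfl; intro i _
          simp
  have hA0 : 0 ≤ ∑ a : Fin N → U, w a * |S a| :=
    Finset.sum_nonneg fun a _ => mul_nonneg (hw0 a) (abs_nonneg _)
  have hCS : (∑ a : Fin N → U, w a * |S a|) ^ 2 ≤ ∑ a : Fin N → U, w a * (S a) ^ 2 := by
    have h := Finset.sum_mul_sq_le_sq_mul_sq Finset.univ
      (fun a : Fin N → U => Real.sqrt (w a)) (fun a => Real.sqrt (w a) * |S a|)
    have e1 : ∀ a : Fin N → U,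
        Real.sqrt (w a) * (Real.sqrt (w a) * |S a|) = w a * |S a| := fun a => by
      rw [← mul_assoc, Real.mul_self_sqrt (hw0 a)]
    have e2 : ∀ a : Fin N → U, Real.sqrt (w a) ^ 2 = w a := fun a => Real.sq_sqrt (hw0 a)
    have e3 : ∀ a : Fin N → U, (Real.sqrt (w a) * |S a|) ^ 2 = w a * (S a) ^ 2 := fun a => by
      rw [mul_pow, Real.sq_sqrt (hw0 a), sq_abs]
    rw [Finset.sum_congr rfl fun a _ => e1 a, Finset.sum_congr rfl fun a _ => e2 a,
      Finset.sum_congr rfl fun a _ => e3 a, hw1, one_mul] at h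
    exact h
  have hbound : ∑ a : Fin N → U, w a * (S a) ^ 2 ≤ (N : ℝ) * M ^ 2 := by
    rw [hsq]
    calc ∑ i : Fin N, ∑ u, p i u * (g i u) ^ 2 ≤ ∑ _i : Fin N, M ^ 2 :=
        Finset.sum_le_sum fun i _ => hvar i
      _ = (N : ℝ) * M ^ 2 := by
          rw [Finset.sum_const, Finset.card_univ, Fintype.card_fin, nsmul_eq_mul]
  have hNpos : (0 : ℝ) < N := by exact_mod_cast hN
  have hsN : Real.sqrt N * Real.sqrt N = (N : ℝ) := Real.mul_self_sqrt hNpos.le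
  have hsNpos : 0 < Real.sqrt N := Real.sqrt_pos.mpr hNpos
  have hA : ∑ a : Fin N → U, w a * |S a| ≤ Real.sqrt N * M := by
    have h2 := hCS.trans hbound
    have h3 := Real.sqrt_le_sqrt h2
    rw [Real.sqrt_sq hA0, Real.sqrt_mul (Nat.cast_nonneg N), Real.sqrt_sq hM0] at h3
    exact h3
  have hgoal : ∑ a : Fin N → U,
      (∏ j, p j (a j)) * |(∑ i, F i (a i)) - ∑ i, m i| = ∑ a : Fin N → U, w a * |S a| := by
    apply Finset.sum_congr rfl; intro a _
    rw [habs a]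
  rw [hgoal]
  calc (1 / (N : ℝ)) * ∑ a : Fin N → U, w a * |S a|
      ≤ (1 / (N : ℝ)) * (Real.sqrt N * M) :=
        mul_le_mul_of_nonneg_left hA (by positivity)
    _ = M / Real.sqrt N := by
        rw [one_div, inv_mul_eq_div, div_eq_div_iff hNpos.ne' hsNpos.ne']
        linear_combination M * hsN

/-- with actions sampled mutually independently,
`uⁱ ~ π(xⁱ,μ^N)` (the expectation being the weighted sum over `a : Fin N → U`),
and `|f| ≤ M_F`,
`(1/N) E|Σᵢ f(xⁱ,uⁱ) − Σᵢ Σ_u f(xⁱ,u) π(xⁱ,μ^N)(u)| ≤ M_F √|U|/√N`. -/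
theorem bounded_f_concentration {X U : Type*}
    [Fintype X] [DecidableEq X] [Fintype U] [DecidableEq U]
    {N : ℕ} (hN : 0 < N) (x : Fin N → X)
    (π : X → (X → ℝ) → U → ℝ)
    (hπ : ∀ x' μ, IsDist μ → IsDist (π x' μ))
    (f : X → U → ℝ) (M_F : ℝ) (hf : ∀ x' u, |f x' u| ≤ M_F) :
    (1 / (N : ℝ)) * ∑ a : Fin N → U,
        (∏ j, π (x j) (empDist x) (a j)) *
          |(∑ i, f (x i) (a i)) -
            ∑ i, ∑ u, f (x i) u * π (x i) (empDist x) u| ≤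
      M_F * Real.sqrt (Fintype.card U) / Real.sqrt N := by
  rcases isEmpty_or_nonempty U with hU | hU
  · have hE : IsEmpty (Fin N → U) := ⟨fun a => hU.false (a ⟨0, hN⟩)⟩
    rw [Finset.univ_eq_empty, Finset.sum_empty, mul_zero]
    rw [Fintype.card_eq_zero]
    simp
  · have hdist : IsDist (empDist x) := by
      constructor
      · intro s
        apply mul_nonneg (by positivity)
        exact Finset.sum_nonneg fun i _ => by positivity
      · unfold empDist
        rw [← Finset.mul_sum, Finset.sum_comm]
        have e : ∀ i : Fin N, ∑ s, (if x i = s then (1 : ℝ) else 0) = 1 := by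
          intro i; simp
        rw [Finset.sum_congr rfl fun i _ => e i, Finset.sum_const, Finset.card_univ,
          Fintype.card_fin, nsmul_eq_mul, mul_one]
        have : (N : ℝ) ≠ 0 := by exact_mod_cast hN.ne'
        field_simp
    have h := main_aux hN (fun i u => π (x i) (empDist x) u)
      (fun i u => (hπ (x i) (empDist x) hdist).1 u)
      (fun i => (hπ (x i) (empDist x) hdist).2)
      (fun i u => f (x i) u) M_F (fun i u => hf (x i) u)
    refine le_trans h ?_
    have hM0 : 0 ≤ M_F := le_trans (abs_nonneg _) (hf (x ⟨0, hN⟩) (Classical.arbitrary U))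
    have hsNpos : 0 < Real.sqrt N := Real.sqrt_pos.mpr (by exact_mod_cast hN)
    have hc : (1 : ℝ) ≤ Real.sqrt (Fintype.card U) := by
      rw [show (1 : ℝ) = Real.sqrt 1 from Real.sqrt_one.symm]
      apply Real.sqrt_le_sqrt
      exact_mod_cast Fintype.card_pos
    exact (div_le_div_iff_of_pos_right hsNpos).mpr (le_mul_of_one_le_right hM0 hc)
end

section
/- Consider the N-agent process driven by policies {π_t}, with W an N×N doubly stochastic matrix and reward r(x,u,μ,ν) = a^T μ + b^T ν + f(x,u), where |f(x,u)| ≤ M_F for all x, u. Then for any discount factor γ ∈ [0,1): Σ_{t=0}^∞ γ^t E| (1/N) Σ_{i=1}^N r(x_t^i, u_t^i, μ_t^{i,N}, ν_t^{i,N}) − r^MF(μ_t^N, π_t) | ≤ (|b|_1 + M_F) · (√|U| / √N) · 1/(1 − γ). -/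
/-- Law of the `N`-agent state vector at time `t` for the process started at the
deterministic state vector `x0`: at each time, actions are sampled mutually
independently with `u_tⁱ ~ π_t(x_tⁱ, μ_t^N)` and next states mutually
independently with `x_{t+1}ⁱ ~ P(x_tⁱ, u_tⁱ, μ_t^N, ν_t^N)`. -/
noncomputable def lawS {X U : Type*}
    [Fintype X] [DecidableEq X] [Fintype U] [DecidableEq U] {N : ℕ}
    (P : X → U → (X → ℝ) → (U → ℝ) → X → ℝ)
    (π : ℕ → X → (X → ℝ) → U → ℝ) (x0 : Fin N → X) :
    ℕ → (Fin N → X) → ℝ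
  | 0 => fun s => if s = x0 then 1 else 0
  | (t + 1) => fun s' => ∑ s : Fin N → X, ∑ a : Fin N → U,
      lawS P π x0 t s * (∏ i, π t (s i) (empDist s) (a i)) *
        (∏ i, P (s i) (a i) (empDist s) (empDist a) (s' i))

/-- Mean-field flow `μ_{t+1} = P^MF(μ_t, π_t)` started from `μ0`. -/
noncomputable def mfFlow {X U : Type*} [Fintype X] [Fintype U]
    (P : X → U → (X → ℝ) → (U → ℝ) → X → ℝ)
    (π : ℕ → X → (X → ℝ) → U → ℝ) (μ0 : X → ℝ) : ℕ → X → ℝ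
  | 0 => μ0
  | (t + 1) => PMFstep P (π t) (mfFlow P π μ0 t)

section Aux

lemma sum_pi_prod {ι β : Type*} [Fintype ι] [DecidableEq ι] [Fintype β]
    (F : ι → β → ℝ) : ∑ g : ι → β, ∏ i, F i (g i) = ∏ i, ∑ u, F i u := by
  rw [Finset.prod_univ_sum]
  rw [Fintype.piFinset_univ]

lemma exp_prod_subset {ι β : Type*} [Fintype ι] [DecidableEq ι] [Fintype β]
    (q : ι → β → ℝ) (hq : ∀ i, ∑ u, q i u = 1) (h : ι → β → ℝ) (T : Finset ι) :
    ∑ g : ι → β, (∏ k, q k (g k)) * ∏ k ∈ T, h k (g k) =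
      ∏ k ∈ T, ∑ u, q k u * h k u := by
  have key := sum_pi_prod (fun k u => q k u * (if k ∈ T then h k u else 1))
  calc ∑ g : ι → β, (∏ k, q k (g k)) * ∏ k ∈ T, h k (g k)
      = ∑ g : ι → β, ∏ k, (q k (g k) * (if k ∈ T then h k (g k) else 1)) := by
        apply Finset.sum_congr rfl
        intro g _
        simp only [Finset.prod_mul_distrib]
        congr 1
        rw [Finset.prod_ite_mem Finset.univ T (fun k => h k (g k))]
        simp
    _ = ∏ k, ∑ u, q k u * (if k ∈ T then h k u else 1) := key
    _ = ∏ k, (if k ∈ T then (∑ u, q k u * h k u) else 1) := by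
        apply Finset.prod_congr rfl
        intro k _
        by_cases hk : k ∈ T <;> simp [hk, hq k]
    _ = ∏ k ∈ T, ∑ u, q k u * h k u := by
        rw [Finset.prod_ite_mem Finset.univ T]
        simp

lemma exp_cross {ι β : Type*} [Fintype ι] [DecidableEq ι] [Fintype β]
    (q c : ι → β → ℝ) (hq1 : ∀ i, ∑ u, q i u = 1)
    (hmean : ∀ i, ∑ u, q i u * c i u = 0) (i j : ι) :
    ∑ g : ι → β, (∏ k, q k (g k)) * (c i (g i) * c j (g j)) =
      if i = j then ∑ u, q i u * (c i u) ^ 2 else 0 := by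
  by_cases hij : i = j
  · subst hij
    simp only [if_pos rfl]
    have := exp_prod_subset q hq1 (fun k u => c k u * c k u) {i}
    simp only [Finset.prod_singleton] at this
    rw [this]
    apply Finset.sum_congr rfl; intro u _; ring
  · simp only [if_neg hij]
    have := exp_prod_subset q hq1 c {i, j}
    simp only [Finset.prod_pair hij] at this
    rw [this, hmean i, zero_mul]

lemma exp_sq_sum {ι β : Type*} [Fintype ι] [DecidableEq ι] [Fintype β]
    (q c : ι → β → ℝ) (hq1 : ∀ i, ∑ u, q i u = 1)
    (hmean : ∀ i, ∑ u, q i u * c i u = 0) :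
    ∑ g : ι → β, (∏ k, q k (g k)) * (∑ i, c i (g i)) ^ 2 =
      ∑ i, ∑ u, q i u * (c i u) ^ 2 := by
  have expand : ∀ g : ι → β, (∏ k, q k (g k)) * (∑ i, c i (g i)) ^ 2 =
      ∑ i, ∑ j, (∏ k, q k (g k)) * (c i (g i) * c j (g j)) := by
    intro g
    rw [sq, Finset.sum_mul_sum, Finset.mul_sum]
    apply Finset.sum_congr rfl; intro i _
    rw [Finset.mul_sum]
  simp_rw [expand]
  rw [Finset.sum_comm]
  apply Finset.sum_congr rfl; intro i _
  rw [Finset.sum_comm]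
  calc ∑ j, ∑ g : ι → β, (∏ k, q k (g k)) * (c i (g i) * c j (g j))
      = ∑ j, if i = j then ∑ u, q i u * (c i u) ^ 2 else 0 := by
        apply Finset.sum_congr rfl; intro j _
        exact exp_cross q c hq1 hmean i j
    _ = ∑ u, q i u * (c i u) ^ 2 := by rw [Finset.sum_ite_eq Finset.univ i]; simp

lemma empDist_isDist {α : Type*} [Fintype α] [DecidableEq α] {N : ℕ}
    (hN : 0 < N) (x : Fin N → α) : IsDist (empDist x) := by
  constructor
  · intro s
    apply mul_nonneg (by positivity)
    apply Finset.sum_nonneg; intro i _; split <;> norm_num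
  · unfold empDist
    rw [← Finset.mul_sum, Finset.sum_comm]
    have : ∀ i : Fin N, ∑ s, (if x i = s then (1:ℝ) else 0) = 1 := by
      intro i; simp
    simp_rw [this]
    simp
    field_simp

lemma lawS_isDist {X U : Type*}
    [Fintype X] [DecidableEq X] [Fintype U] [DecidableEq U] {N : ℕ}
    (hN : 0 < N)
    (P : X → U → (X → ℝ) → (U → ℝ) → X → ℝ)
    (hP : ∀ x u μ ν, IsDist μ → IsDist ν → IsDist (P x u μ ν))
    (π : ℕ → X → (X → ℝ) → U → ℝ)
    (hπ : ∀ t x μ, IsDist μ → IsDist (π t x μ))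
    (x0 : Fin N → X) (t : ℕ) :
    (∀ s, 0 ≤ lawS P π x0 t s) ∧ ∑ s, lawS P π x0 t s = 1 := by
  induction t with
  | zero =>
    constructor
    · intro s; simp only [lawS]; split <;> norm_num
    · simp [lawS]
  | succ t ih =>
    have hpi : ∀ (s : Fin N → X) i u, 0 ≤ π t (s i) (empDist s) u :=
      fun s i u => (hπ t (s i) (empDist s) (empDist_isDist hN s)).1 u
    have hpis : ∀ (s : Fin N → X) i, ∑ u, π t (s i) (empDist s) u = 1 :=
      fun s i => (hπ t (s i) (empDist s) (empDist_isDist hN s)).2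
    have hPd : ∀ (s : Fin N → X) (a : Fin N → U) i,
        IsDist (P (s i) (a i) (empDist s) (empDist a)) :=
      fun s a i => hP _ _ _ _ (empDist_isDist hN s) (empDist_isDist hN a)
    constructor
    · intro s'
      apply Finset.sum_nonneg; intro s _
      apply Finset.sum_nonneg; intro A _
      apply mul_nonneg (mul_nonneg (ih.1 s) _) _
      · exact Finset.prod_nonneg fun i _ => hpi s i (A i)
      · exact Finset.prod_nonneg fun i _ => (hPd s A i).1 (s' i)
    · simp only [lawS]
      rw [Finset.sum_comm]
      calc ∑ s : Fin N → X, ∑ s' : Fin N → X, ∑ A : Fin N → U,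
            lawS P π x0 t s * (∏ i, π t (s i) (empDist s) (A i)) *
              (∏ i, P (s i) (A i) (empDist s) (empDist A) (s' i))
          = ∑ s : Fin N → X, lawS P π x0 t s := by
            apply Finset.sum_congr rfl; intro s _
            rw [Finset.sum_comm]
            calc ∑ A : Fin N → U, ∑ s' : Fin N → X,
                  lawS P π x0 t s * (∏ i, π t (s i) (empDist s) (A i)) *
                    (∏ i, P (s i) (A i) (empDist s) (empDist A) (s' i))
                = ∑ A : Fin N → U,
                    lawS P π x0 t s * (∏ i, π t (s i) (empDist s) (A i)) := by
                  apply Finset.sum_congr rfl; intro A _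
                  rw [← Finset.mul_sum,
                    sum_pi_prod (fun i => P (s i) (A i) (empDist s) (empDist A))]
                  have : ∀ i : Fin N,
                      ∑ u, P (s i) (A i) (empDist s) (empDist A) u = 1 :=
                    fun i => (hPd s A i).2
                  simp_rw [this]
                  simp
              _ = lawS P π x0 t s := by
                  rw [← Finset.mul_sum,
                    sum_pi_prod (fun i => π t (s i) (empDist s))]
                  simp_rw [hpis s]
                  simp
        _ = 1 := ih.2

lemma sum_wDist {α : Type*} [Fintype α] [DecidableEq α] {N : ℕ}
    (W : Fin N → Fin N → ℝ) (x : Fin N → α) (i : Fin N) (h : α → ℝ) :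
    ∑ y, h y * wDist W x i y = ∑ j, W i j * h (x j) := by
  simp only [wDist, Finset.mul_sum]
  rw [Finset.sum_comm]
  apply Finset.sum_congr rfl; intro j _
  calc ∑ y, h y * (W i j * if x j = y then (1:ℝ) else 0)
      = ∑ y, if x j = y then W i j * h y else 0 := by
        apply Finset.sum_congr rfl; intro y _
        split <;> ring
    _ = W i j * h (x j) := by rw [Finset.sum_ite_eq]; simp

lemma sum_emp {α : Type*} [Fintype α] [DecidableEq α] {N : ℕ}
    (x : Fin N → α) (h : α → ℝ) :
    ∑ y, h y * empDist x y = (1 / (N : ℝ)) * ∑ i, h (x i) := by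
  simp only [empDist, Finset.mul_sum]
  rw [Finset.sum_comm]
  apply Finset.sum_congr rfl; intro j _
  calc ∑ y, h y * (1 / (N:ℝ) * if x j = y then (1:ℝ) else 0)
      = ∑ y, if x j = y then 1 / (N:ℝ) * h y else 0 := by
        apply Finset.sum_congr rfl; intro y _
        split <;> ring
    _ = 1 / (N:ℝ) * h (x j) := by rw [Finset.sum_ite_eq]; simp

lemma gap_eq {X U : Type*} [Fintype X] [DecidableEq X] [Fintype U] [DecidableEq U]
    {N : ℕ} (W : Fin N → Fin N → ℝ) (hWcol : ∀ j, ∑ i, W i j = 1)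
    (a : X → ℝ) (b : U → ℝ) (f : X → U → ℝ)
    (p : X → (X → ℝ) → U → ℝ) (s : Fin N → X)
    (hp1 : ∀ x, ∑ u, p x (empDist s) u = 1)
    (hμ1 : ∑ x, empDist s x = 1) (act : Fin N → U) :
    (1 / (N : ℝ)) * (∑ i, ((∑ y, a y * wDist W s i y) +
        (∑ v, b v * wDist W act i v) + f (s i) (act i))) -
      rMF (fun x' u' μ ν => (∑ y, a y * μ y) + (∑ v, b v * ν v) + f x' u')
        p (empDist s) =
    (1 / (N : ℝ)) * ∑ i, (b (act i) + f (s i) (act i) -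
        ∑ u, p (s i) (empDist s) u * (b u + f (s i) u)) := by
  have e1 : ∑ i, ∑ y, a y * wDist W s i y = ∑ j, a (s j) := by
    simp_rw [sum_wDist]
    rw [Finset.sum_comm]
    apply Finset.sum_congr rfl; intro j _
    rw [← Finset.sum_mul, hWcol j, one_mul]
  have e2 : ∑ i, ∑ v, b v * wDist W act i v = ∑ j, b (act j) := by
    simp_rw [sum_wDist]
    rw [Finset.sum_comm]
    apply Finset.sum_congr rfl; intro j _
    rw [← Finset.sum_mul, hWcol j, one_mul]
  have e3 : rMF (fun x' u' μ ν => (∑ y, a y * μ y) + (∑ v, b v * ν v) + f x' u')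
        p (empDist s) =
      (1 / (N : ℝ)) * (∑ j, a (s j)) +
        (1 / (N : ℝ)) * ∑ i, ∑ u, p (s i) (empDist s) u * (b u + f (s i) u) := by
    simp only [rMF]
    have split : ∀ x : X, ∑ u, ((∑ y, a y * empDist s y) +
          (∑ v, b v * nuMF p (empDist s) v) + f x u) * p x (empDist s) u * empDist s x =
        ((∑ y, a y * empDist s y) + (∑ v, b v * nuMF p (empDist s) v)) * empDist s x +
          (∑ u, f x u * p x (empDist s) u) * empDist s x := by
      intro x
      rw [← Finset.sum_mul, ← add_mul]
      congr 1
      have : ∀ u : U, ((∑ y, a y * empDist s y) +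
            (∑ v, b v * nuMF p (empDist s) v) + f x u) * p x (empDist s) u =
          ((∑ y, a y * empDist s y) + (∑ v, b v * nuMF p (empDist s) v)) * p x (empDist s) u
            + f x u * p x (empDist s) u := by intro u; ring
      simp_rw [this]
      rw [Finset.sum_add_distrib, ← Finset.mul_sum, hp1 x, mul_one]
    simp_rw [split]
    rw [Finset.sum_add_distrib, ← Finset.mul_sum, hμ1, mul_one]
    have eA : ∑ y, a y * empDist s y = (1 / (N : ℝ)) * ∑ j, a (s j) := sum_emp s a
    have eB : ∑ v, b v * nuMF p (empDist s) v =
        (1 / (N : ℝ)) * ∑ i, ∑ v, b v * p (s i) (empDist s) v := by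
      have hv : ∀ v, nuMF p (empDist s) v = (1 / (N : ℝ)) * ∑ i, p (s i) (empDist s) v :=
        fun v => sum_emp s (fun x => p x (empDist s) v)
      simp_rw [hv, Finset.mul_sum]
      rw [Finset.sum_comm]
      apply Finset.sum_congr rfl; intro i _
      apply Finset.sum_congr rfl; intro v _
      ring
    have eF : ∑ x, (∑ u, f x u * p x (empDist s) u) * empDist s x =
        (1 / (N : ℝ)) * ∑ i, ∑ u, f (s i) u * p (s i) (empDist s) u :=
      sum_emp s (fun x => ∑ u, f x u * p x (empDist s) u)
    rw [eA, eB, eF]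
    have : ∀ i : Fin N, ∑ u, p (s i) (empDist s) u * (b u + f (s i) u) =
        (∑ v, b v * p (s i) (empDist s) v) + ∑ u, f (s i) u * p (s i) (empDist s) u := by
      intro i
      rw [← Finset.sum_add_distrib]
      apply Finset.sum_congr rfl; intro u _; ring
    simp_rw [this]
    rw [Finset.sum_add_distrib]
    ring
  rw [Finset.sum_add_distrib, Finset.sum_add_distrib, e1, e2, e3,
    Finset.sum_sub_distrib, Finset.sum_add_distrib]
  ring

lemma weighted_abs_bound {ι β : Type*} [Fintype ι] [DecidableEq ι] [Fintype β]
    (q Y : ι → β → ℝ) (C : ℝ) (hC : 0 ≤ C)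
    (hq0 : ∀ i u, 0 ≤ q i u) (hq1 : ∀ i, ∑ u, q i u = 1)
    (hY : ∀ i u, |Y i u| ≤ C) :
    ∑ g : ι → β, (∏ k, q k (g k)) *
        |∑ i, (Y i (g i) - ∑ u, q i u * Y i u)| ≤
      Real.sqrt (Fintype.card ι) * C := by
  set c : ι → β → ℝ := fun i u => Y i u - ∑ u', q i u' * Y i u' with hc
  have hw0 : ∀ g : ι → β, 0 ≤ ∏ k, q k (g k) :=
    fun g => Finset.prod_nonneg fun k _ => hq0 k (g k)
  have hw1 : ∑ g : ι → β, ∏ k, q k (g k) = 1 := by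
    rw [sum_pi_prod q]
    simp_rw [hq1]
    simp
  have hmean : ∀ i, ∑ u, q i u * c i u = 0 := by
    intro i
    have : ∀ u, q i u * c i u =
        q i u * Y i u - (∑ u', q i u' * Y i u') * q i u := by
      intro u; simp only [hc]; ring
    simp_rw [this]
    rw [Finset.sum_sub_distrib, ← Finset.mul_sum, hq1, mul_one]
    ring
  have hvar : ∀ i, ∑ u, q i u * (c i u) ^ 2 ≤ C ^ 2 := by
    intro i
    have hid : ∑ u, q i u * (c i u) ^ 2 =
        (∑ u, q i u * (Y i u) ^ 2) - (∑ u', q i u' * Y i u') ^ 2 := by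
      have : ∀ u, q i u * (c i u) ^ 2 =
          q i u * (Y i u) ^ 2 -
            2 * (∑ u', q i u' * Y i u') * (q i u * Y i u) +
            (∑ u', q i u' * Y i u') ^ 2 * q i u := by
        intro u; simp only [hc]; ring
      simp_rw [this]
      rw [Finset.sum_add_distrib, Finset.sum_sub_distrib, ← Finset.mul_sum,
        ← Finset.mul_sum, hq1, mul_one]
      ring
    rw [hid]
    have h1 : ∑ u, q i u * (Y i u) ^ 2 ≤ C ^ 2 := by
      calc ∑ u, q i u * (Y i u) ^ 2 ≤ ∑ u, q i u * C ^ 2 := by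
            apply Finset.sum_le_sum; intro u _
            apply mul_le_mul_of_nonneg_left _ (hq0 i u)
            have := abs_le.mp (hY i u)
            exact sq_le_sq' (by linarith [this.1]) this.2
        _ = C ^ 2 := by rw [← Finset.sum_mul, hq1, one_mul]
    nlinarith [sq_nonneg (∑ u', q i u' * Y i u')]
  set T := ∑ g : ι → β, (∏ k, q k (g k)) * |∑ i, c i (g i)| with hT
  have hT0 : 0 ≤ T :=
    Finset.sum_nonneg fun g _ => mul_nonneg (hw0 g) (abs_nonneg _)
  have hT2 : T ^ 2 ≤ (Fintype.card ι : ℝ) * C ^ 2 := by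
    have cs := Finset.sum_mul_sq_le_sq_mul_sq Finset.univ
      (fun g : ι → β => Real.sqrt (∏ k, q k (g k)))
      (fun g : ι → β => Real.sqrt (∏ k, q k (g k)) * |∑ i, c i (g i)|)
    have e1 : ∀ g : ι → β, Real.sqrt (∏ k, q k (g k)) *
        (Real.sqrt (∏ k, q k (g k)) * |∑ i, c i (g i)|) =
        (∏ k, q k (g k)) * |∑ i, c i (g i)| := by
      intro g
      rw [← mul_assoc, Real.mul_self_sqrt (hw0 g)]
    have e2 : ∀ g : ι → β, Real.sqrt (∏ k, q k (g k)) ^ 2 = ∏ k, q k (g k) :=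
      fun g => Real.sq_sqrt (hw0 g)
    have e3 : ∀ g : ι → β, (Real.sqrt (∏ k, q k (g k)) * |∑ i, c i (g i)|) ^ 2 =
        (∏ k, q k (g k)) * (∑ i, c i (g i)) ^ 2 := by
      intro g
      rw [mul_pow, Real.sq_sqrt (hw0 g), sq_abs]
    simp_rw [e1, e2, e3] at cs
    rw [hw1, one_mul] at cs
    calc T ^ 2 ≤ ∑ g : ι → β, (∏ k, q k (g k)) * (∑ i, c i (g i)) ^ 2 := cs
      _ = ∑ i, ∑ u, q i u * (c i u) ^ 2 := exp_sq_sum q c hq1 hmean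
      _ ≤ ∑ _i : ι, C ^ 2 := Finset.sum_le_sum fun i _ => hvar i
      _ = (Fintype.card ι : ℝ) * C ^ 2 := by
          rw [Finset.sum_const, Finset.card_univ, nsmul_eq_mul]
  have hle : T ≤ Real.sqrt ((Fintype.card ι : ℝ) * C ^ 2) :=
    (Real.le_sqrt hT0 (by positivity)).mpr hT2
  calc ∑ g : ι → β, (∏ k, q k (g k)) * |∑ i, (Y i (g i) - ∑ u, q i u * Y i u)|
      = T := rfl
    _ ≤ Real.sqrt ((Fintype.card ι : ℝ) * C ^ 2) := hle
    _ = Real.sqrt (Fintype.card ι) * C := by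
        rw [Real.sqrt_mul (by positivity), Real.sqrt_sq hC]

end Aux

/-- with a doubly stochastic `W` and the affine reward
`r(x,u,μ,ν) = aᵀμ + bᵀν + f(x,u)`, `|f| ≤ M_F`, for any discount `γ ∈ [0,1)`,
`Σ_t γ^t E|(1/N)Σᵢ r(x_tⁱ,u_tⁱ,μ_t^{i,N},ν_t^{i,N}) − r^MF(μ_t^N,π_t)|
  ≤ (|b|₁ + M_F)(√|U|/√N)(1/(1−γ))`.
(The expectation at time `t` is over the joint law of the state vector `s` at
time `t` and the actions `act` sampled from `π_t`.) -/
theorem discounted_reward_gap_bound {X U : Type*}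
    [Fintype X] [DecidableEq X] [Fintype U] [DecidableEq U]
    {N : ℕ} (hN : 0 < N)
    (W : Fin N → Fin N → ℝ) (hW0 : ∀ i j, 0 ≤ W i j)
    (hWrow : ∀ i, ∑ j, W i j = 1) (hWcol : ∀ j, ∑ i, W i j = 1)
    (a : X → ℝ) (b : U → ℝ) (f : X → U → ℝ) (M_F : ℝ)
    (hf : ∀ x u, |f x u| ≤ M_F)
    (P : X → U → (X → ℝ) → (U → ℝ) → X → ℝ)
    (hP : ∀ x u μ ν, IsDist μ → IsDist ν → IsDist (P x u μ ν))
    (π : ℕ → X → (X → ℝ) → U → ℝ)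
    (hπ : ∀ t x μ, IsDist μ → IsDist (π t x μ))
    (γ : ℝ) (hγ0 : 0 ≤ γ) (hγ1 : γ < 1)
    (x0 : Fin N → X) :
    ∑' t : ℕ, γ ^ t * (∑ s : Fin N → X, ∑ act : Fin N → U,
        (lawS P π x0 t s * ∏ i, π t (s i) (empDist s) (act i)) *
          |(1 / (N : ℝ)) * (∑ i, ((∑ y, a y * wDist W s i y) +
              (∑ v, b v * wDist W act i v) + f (s i) (act i))) -
            rMF (fun x' u' μ ν => (∑ y, a y * μ y) + (∑ v, b v * ν v) + f x' u')
              (π t) (empDist s)|) ≤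
      ((∑ v, |b v|) + M_F) * (Real.sqrt (Fintype.card U) / Real.sqrt N) *
        (1 / (1 - γ)) := by
  rcases isEmpty_or_nonempty U with hU | hU
  · exact absurd ((hπ 0 (x0 ⟨0, hN⟩) (empDist x0) (empDist_isDist hN x0)).2)
      (by simp)
  obtain ⟨u0⟩ := hU
  have hMF : 0 ≤ M_F := le_trans (abs_nonneg _) (hf (x0 ⟨0, hN⟩) u0)
  set C : ℝ := (∑ v, |b v|) + M_F with hCdef
  have hC : 0 ≤ C := add_nonneg (Finset.sum_nonneg fun v _ => abs_nonneg _) hMF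
  have hN' : (0:ℝ) < N := by exact_mod_cast hN
  have hs : (0:ℝ) < Real.sqrt N := Real.sqrt_pos.mpr hN'
  set K : ℝ := C * (Real.sqrt (Fintype.card U) / Real.sqrt N) with hKdef
  have hK0 : 0 ≤ K := mul_nonneg hC (by positivity)
  have hld := lawS_isDist hN P hP π hπ x0
  -- per-time nonnegativity
  have hE0 : ∀ t : ℕ, 0 ≤ ∑ s : Fin N → X, ∑ act : Fin N → U,
      (lawS P π x0 t s * ∏ i, π t (s i) (empDist s) (act i)) *
        |(1 / (N : ℝ)) * (∑ i, ((∑ y, a y * wDist W s i y) +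
            (∑ v, b v * wDist W act i v) + f (s i) (act i))) -
          rMF (fun x' u' μ ν => (∑ y, a y * μ y) + (∑ v, b v * ν v) + f x' u')
            (π t) (empDist s)| := by
    intro t
    apply Finset.sum_nonneg; intro s _
    apply Finset.sum_nonneg; intro act _
    apply mul_nonneg _ (abs_nonneg _)
    apply mul_nonneg ((hld t).1 s)
    exact Finset.prod_nonneg fun i _ =>
      (hπ t (s i) (empDist s) (empDist_isDist hN s)).1 (act i)
  -- per-time bound
  have key : ∀ t : ℕ, (∑ s : Fin N → X, ∑ act : Fin N → U,
      (lawS P π x0 t s * ∏ i, π t (s i) (empDist s) (act i)) *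
        |(1 / (N : ℝ)) * (∑ i, ((∑ y, a y * wDist W s i y) +
            (∑ v, b v * wDist W act i v) + f (s i) (act i))) -
          rMF (fun x' u' μ ν => (∑ y, a y * μ y) + (∑ v, b v * ν v) + f x' u')
            (π t) (empDist s)|) ≤ K := by
    intro t
    have hstate : ∀ s : Fin N → X, (∑ act : Fin N → U,
        (∏ i, π t (s i) (empDist s) (act i)) *
          |(1 / (N : ℝ)) * (∑ i, ((∑ y, a y * wDist W s i y) +
              (∑ v, b v * wDist W act i v) + f (s i) (act i))) -
            rMF (fun x' u' μ ν => (∑ y, a y * μ y) + (∑ v, b v * ν v) + f x' u')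
              (π t) (empDist s)|) ≤ (1 / (N:ℝ)) * (Real.sqrt N * C) := by
      intro s
      have hd := empDist_isDist hN s
      have hp1 : ∀ x, ∑ u, π t x (empDist s) u = 1 := fun x => (hπ t x _ hd).2
      have hp0 : ∀ x u, 0 ≤ π t x (empDist s) u := fun x u => (hπ t x _ hd).1 u
      have hY : ∀ (i : Fin N) (u : U), |b u + f (s i) u| ≤ C := by
        intro i u
        calc |b u + f (s i) u| ≤ |b u| + |f (s i) u| := abs_add_le _ _
          _ ≤ (∑ v, |b v|) + M_F :=
              add_le_add (Finset.single_le_sum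
                (fun v _ => abs_nonneg (b v)) (Finset.mem_univ u)) (hf _ u)
      calc ∑ act : Fin N → U, (∏ i, π t (s i) (empDist s) (act i)) *
            |(1 / (N : ℝ)) * (∑ i, ((∑ y, a y * wDist W s i y) +
                (∑ v, b v * wDist W act i v) + f (s i) (act i))) -
              rMF (fun x' u' μ ν => (∑ y, a y * μ y) + (∑ v, b v * ν v) + f x' u')
                (π t) (empDist s)|
          = ∑ act : Fin N → U, (1 / (N:ℝ)) *
              ((∏ i, π t (s i) (empDist s) (act i)) *
                |∑ i, (b (act i) + f (s i) (act i) -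
                  ∑ u, π t (s i) (empDist s) u * (b u + f (s i) u))|) := by
            apply Finset.sum_congr rfl; intro act _
            rw [gap_eq W hWcol a b f (π t) s hp1 hd.2 act, abs_mul,
              abs_of_nonneg (by positivity : (0:ℝ) ≤ 1/(N:ℝ))]
            ring
        _ = (1 / (N:ℝ)) * ∑ act : Fin N → U,
              (∏ i, π t (s i) (empDist s) (act i)) *
                |∑ i, (b (act i) + f (s i) (act i) -
                  ∑ u, π t (s i) (empDist s) u * (b u + f (s i) u))| := by
            rw [Finset.mul_sum]
        _ ≤ (1 / (N:ℝ)) * (Real.sqrt N * C) := by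
            apply mul_le_mul_of_nonneg_left _ (by positivity)
            have := weighted_abs_bound (fun i => π t (s i) (empDist s))
              (fun i u => b u + f (s i) u) C hC (fun i u => hp0 _ u)
              (fun i => hp1 _) hY
            simpa [Fintype.card_fin] using this
    calc ∑ s : Fin N → X, ∑ act : Fin N → U,
          (lawS P π x0 t s * ∏ i, π t (s i) (empDist s) (act i)) *
            |(1 / (N : ℝ)) * (∑ i, ((∑ y, a y * wDist W s i y) +
                (∑ v, b v * wDist W act i v) + f (s i) (act i))) -
              rMF (fun x' u' μ ν => (∑ y, a y * μ y) + (∑ v, b v * ν v) + f x' u')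
                (π t) (empDist s)|
        = ∑ s : Fin N → X, lawS P π x0 t s * ∑ act : Fin N → U,
            (∏ i, π t (s i) (empDist s) (act i)) *
              |(1 / (N : ℝ)) * (∑ i, ((∑ y, a y * wDist W s i y) +
                  (∑ v, b v * wDist W act i v) + f (s i) (act i))) -
                rMF (fun x' u' μ ν => (∑ y, a y * μ y) + (∑ v, b v * ν v) + f x' u')
                  (π t) (empDist s)| := by
          apply Finset.sum_congr rfl; intro s _
          rw [Finset.mul_sum]
          apply Finset.sum_congr rfl; intro act _
          ring
      _ ≤ ∑ s : Fin N → X, lawS P π x0 t s * ((1 / (N:ℝ)) * (Real.sqrt N * C)) := by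
          apply Finset.sum_le_sum; intro s _
          exact mul_le_mul_of_nonneg_left (hstate s) ((hld t).1 s)
      _ = (1 / (N:ℝ)) * (Real.sqrt N * C) := by
          rw [← Finset.sum_mul, (hld t).2, one_mul]
      _ ≤ K := by
          have hm : 0 < Fintype.card U := Fintype.card_pos_iff.mpr ⟨u0⟩
          have heq : (1/(N:ℝ)) * (Real.sqrt N * C) = C / Real.sqrt N := by
            have h2 : Real.sqrt N * Real.sqrt N = (N:ℝ) := Real.mul_self_sqrt hN'.le
            rw [eq_div_iff (ne_of_gt hs)]
            field_simp
            nlinarith [h2]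
          rw [heq, hKdef]
          have h1 : (1:ℝ) ≤ Real.sqrt (Fintype.card U) := by
            rw [show (1:ℝ) = Real.sqrt 1 by simp]
            apply Real.sqrt_le_sqrt
            exact_mod_cast hm
          calc C / Real.sqrt N = C * (1 / Real.sqrt N) := by ring
            _ ≤ C * (Real.sqrt (Fintype.card U) / Real.sqrt N) := by
                apply mul_le_mul_of_nonneg_left _ hC
                rw [div_le_div_iff_of_pos_right hs]; exact h1
  -- sum up the geometric series
  have main : ∀ E : ℕ → ℝ, (∀ t, 0 ≤ E t) → (∀ t, E t ≤ K) →
      ∑' t : ℕ, γ ^ t * E t ≤ K * (1 / (1 - γ)) := by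
    intro E hE0' hE
    have hterm : ∀ t, γ ^ t * E t ≤ γ ^ t * K :=
      fun t => mul_le_mul_of_nonneg_left (hE t) (pow_nonneg hγ0 t)
    have hsumR : Summable (fun t : ℕ => γ ^ t * K) :=
      (summable_geometric_of_lt_one hγ0 hγ1).mul_right K
    have hsumL : Summable (fun t : ℕ => γ ^ t * E t) :=
      Summable.of_nonneg_of_le
        (fun t => mul_nonneg (pow_nonneg hγ0 t) (hE0' t)) hterm hsumR
    calc ∑' t : ℕ, γ ^ t * E t ≤ ∑' t : ℕ, γ ^ t * K :=
          Summable.tsum_le_tsum hterm hsumL hsumR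
      _ = (∑' t : ℕ, γ ^ t) * K := tsum_mul_right
      _ = K * (1 / (1 - γ)) := by rw [tsum_geometric_of_lt_one hγ0 hγ1]; ring
  exact main _ hE0 key
end
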